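/- arXiv:2312.10873 — 15 statements merged into one kernel-verified Lean document; each statement's English description precedes it below -/
import Mathlib

section
/- Let (X, ≤) be a poset and S a binary relation on X such that z ≤ x and (z, y) ∈ S imply (x, y) ∈ S. Then for all upward-closed sets U, V, W ⊆ X: the set U ⇐_S V is upward closed, and the following hold: U ⇐_S U = ∅; (U ∪ V) ⇐_S W = (U ⇐_S W) ∪ (V ⇐_S W); U ⇐_S (V ∩ W) = (U ⇐_S V) ∪ (U ⇐_S W); and U ⇐_S W ⊆ (U ⇐_S V) ∪ (V ⇐_S W). (That is, the lattice of upward-closed subsets of X with the operation ⇐_S is a WD-algebra.) -/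
/-- U ⇐_S V = { x : ∃ y, (x,y) ∈ S, y ∈ U, y ∉ V }. -/
def leftS {X : Type*} (S : X → X → Prop) (U V : Set X) : Set X :=
  { x : X | ∃ y : X, S x y ∧ y ∈ U ∧ y ∉ V }

theorem upsets_form_WD_algebra {X : Type*} [PartialOrder X] (S : X → X → Prop)
    (hS : ∀ x y z : X, z ≤ x → S z y → S x y)
    (U V W : Set X) (hU : IsUpperSet U) (hV : IsUpperSet V) (hW : IsUpperSet W) :
    IsUpperSet (leftS S U V) ∧
    leftS S U U = ∅ ∧
    leftS S (U ∪ V) W = leftS S U W ∪ leftS S V W ∧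
    leftS S U (V ∩ W) = leftS S U V ∪ leftS S U W ∧
    leftS S U W ⊆ leftS S U V ∪ leftS S V W := by
  refine ⟨?_, ?_, ?_, ?_, ?_⟩
  · rintro a b hab ⟨y, hy, hyU, hyV⟩
    exact ⟨y, hS b y a hab hy, hyU, hyV⟩
  · ext x
    constructor
    · rintro ⟨y, _, hyU, hyU'⟩; exact (hyU' hyU).elim
    · intro h; exact h.elim
  · ext x
    constructor
    · rintro ⟨y, hy, hyUV, hyW⟩
      rcases hyUV with h | h
      · exact Or.inl ⟨y, hy, h, hyW⟩
      · exact Or.inr ⟨y, hy, h, hyW⟩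
    · rintro (⟨y, hy, hyU, hyW⟩ | ⟨y, hy, hyV, hyW⟩)
      · exact ⟨y, hy, Or.inl hyU, hyW⟩
      · exact ⟨y, hy, Or.inr hyV, hyW⟩
  · ext x
    constructor
    · rintro ⟨y, hy, hyU, hyVW⟩
      by_cases h : y ∈ V
      · exact Or.inr ⟨y, hy, hyU, fun hw => hyVW ⟨h, hw⟩⟩
      · exact Or.inl ⟨y, hy, hyU, h⟩
    · rintro (⟨y, hy, hyU, hyV⟩ | ⟨y, hy, hyU, hyW⟩)
      · exact ⟨y, hy, hyU, fun h => hyV h.1⟩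
      · exact ⟨y, hy, hyU, fun h => hyW h.2⟩
  · rintro x ⟨y, hy, hyU, hyW⟩
    by_cases h : y ∈ V
    · exact Or.inr ⟨y, hy, h, hyW⟩
    · exact Or.inl ⟨y, hy, hyU, h⟩
end

section
/- Let A be a WD-algebra, P a prime filter of A, and X ⊆ A. Then (P, F_P(X)) ∈ S_A, i.e., for all a, b ∈ A, if a ∈ F_P(X) and b ∉ F_P(X) then a ← b ∈ P. -/
def IsLatFilter {A : Type*} [Lattice A] (F : Set A) : Prop :=
  F.Nonempty ∧ (∀ a b : A, a ∈ F → a ≤ b → b ∈ F) ∧ (∀ a b : A, a ∈ F → b ∈ F → a ⊓ b ∈ F)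

def IsPrimeFilter {A : Type*} [Lattice A] (F : Set A) : Prop :=
  IsLatFilter F ∧ F ≠ Set.univ ∧ ∀ a b : A, a ⊔ b ∈ F → a ∈ F ∨ b ∈ F

/-- The relation S_A: (P,Q) ∈ S_A iff for all a b, a ∈ Q and b ∉ Q imply a ← b ∈ P. -/
def SRel {A : Type*} (d : A → A → A) (P Q : Set A) : Prop :=
  ∀ a b : A, a ∈ Q → b ∉ Q → d a b ∈ P

/-- F_P(X) = { a : ∃ finite Y ⊆ X, (⋁ Y) ← a ∉ P }, with ⋁ ∅ = 0. -/
def FP {A : Type*} [SemilatticeSup A] [OrderBot A] (d : A → A → A) (P X : Set A) : Set A :=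
  { a : A | ∃ Y : Finset A, ↑Y ⊆ X ∧ d (Y.sup id) a ∉ P }

theorem FP_SRel {A : Type*} [DistribLattice A] [BoundedOrder A] (d : A → A → A)
(hd1 : ∀ a : A, d a a = ⊥)
    (hd2 : ∀ a b c : A, d (a ⊔ b) c = d a c ⊔ d b c)
    (hd3 : ∀ a b c : A, d a (b ⊓ c) = d a b ⊔ d a c)
    (hd4 : ∀ a b c : A, d a c ≤ d a b ⊔ d b c)
    (P : Set A) (hP : IsPrimeFilter P) (X : Set A) :
    SRel d P (FP d P X) := by
  intro a b ha hb
  obtain ⟨Y, hYX, hYa⟩ := ha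
  have hYb : d (Y.sup id) b ∈ P := by
    by_contra h
    exact hb ⟨Y, hYX, h⟩
  have hup := hP.1.2.1 _ _ hYb (hd4 (Y.sup id) a b)
  rcases hP.2.2 _ _ hup with h | h
  · exact absurd h hYa
  · exact h
end

section
/- Let A be a WD-algebra, P a prime filter of A, and a, b ∈ A. Then a ← b ∈ P if and only if there exists a prime filter Q of A such that (P, Q) ∈ S_A, a ∈ Q, and b ∉ Q. -/
theorem diff_mem_iff {A : Type*} [DistribLattice A] [BoundedOrder A] (d : A → A → A)
(hd1 : ∀ a : A, d a a = ⊥)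
    (hd2 : ∀ a b c : A, d (a ⊔ b) c = d a c ⊔ d b c)
    (hd3 : ∀ a b c : A, d a (b ⊓ c) = d a b ⊔ d a c)
    (hd4 : ∀ a b c : A, d a c ≤ d a b ⊔ d b c)
    (P : Set A) (hP : IsPrimeFilter P) (a b : A) :
    d a b ∈ P ↔ ∃ Q : Set A, IsPrimeFilter Q ∧ SRel d P Q ∧ a ∈ Q ∧ b ∉ Q := by
  obtain ⟨⟨hPne, hPup, hPmeet⟩, hPuniv, hPprime⟩ := hP
  have hbot : (⊥ : A) ∉ P := by
    intro h
    exact hPuniv (Set.eq_univ_of_forall fun x => hPup ⊥ x h bot_le)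
  have mono1 : ∀ x x' y : A, x ≤ x' → d x y ≤ d x' y := by
    intro x x' y h
    have h1 : x ⊔ x' = x' := sup_eq_right.mpr h
    rw [← h1, hd2]; exact le_sup_left
  have anti2 : ∀ x y y' : A, y ≤ y' → d x y' ≤ d x y := by
    intro x y y' h
    have h1 : y ⊓ y' = y := inf_eq_left.mpr h
    conv_rhs => rw [← h1, hd3]
    exact le_sup_right
  have hnle : ∀ {u v : A}, u ≤ v → v ∉ P → u ∉ P := fun h hv hu => hv (hPup _ _ hu h)
  have hsupnot : ∀ {u v : A}, u ∉ P → v ∉ P → u ⊔ v ∉ P :=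
    fun hu hv h => (hPprime _ _ h).elim hu hv
  constructor
  · intro hab
    -- the collection of G-closed filters containing a and missing b
    set C : Set (Set A) := {F | (∀ x z : A, x ∈ F → x ≤ z → z ∈ F) ∧
        (∀ x y : A, x ∈ F → y ∈ F → x ⊓ y ∈ F) ∧
        (∀ x y : A, x ∈ F → d x y ∉ P → y ∈ F) ∧ a ∈ F ∧ b ∉ F} with hC
    have hGa : {y : A | d a y ∉ P} ∈ C := by
      refine ⟨?_, ?_, ?_, ?_, ?_⟩
      · intro x z hx hxz
        exact hnle (anti2 a x z hxz) hx
      · intro x y hx hy h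
        rw [hd3] at h
        exact (hPprime _ _ h).elim hx hy
      · intro x y hx hxy h
        exact (hPprime _ _ (hPup _ _ h (hd4 a x y))).elim hx hxy
      · simp only [Set.mem_setOf_eq, hd1]; exact hbot
      · simp only [Set.mem_setOf_eq, not_not]; exact hab
    obtain ⟨Q, -, hQC, hQmax⟩ := zorn_subset_nonempty C (by
      intro c hc hchain hcne
      obtain ⟨F0, hF0⟩ := hcne
      refine ⟨⋃₀ c, ⟨?_, ?_, ?_, ?_, ?_⟩, fun s hs => Set.subset_sUnion_of_mem hs⟩
      · rintro x z ⟨F, hF, hxF⟩ hxz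
        exact ⟨F, hF, (hc hF).1 x z hxF hxz⟩
      · rintro x y ⟨F, hF, hxF⟩ ⟨F', hF', hyF'⟩
        rcases hchain.total hF hF' with h | h
        · exact ⟨F', hF', (hc hF').2.1 x y (h hxF) hyF'⟩
        · exact ⟨F, hF, (hc hF).2.1 x y hxF (h hyF')⟩
      · rintro x y ⟨F, hF, hxF⟩ hxy
        exact ⟨F, hF, (hc hF).2.2.1 x y hxF hxy⟩
      · exact ⟨F0, hF0, (hc hF0).2.2.2.1⟩
      · rintro ⟨F, hF, hbF⟩
        exact (hc hF).2.2.2.2 hbF) _ hGa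
    obtain ⟨hQup, hQmeet, hQG, haQ, hbQ⟩ := hQC
    -- Q is prime
    have hQprime : ∀ x y : A, x ⊔ y ∈ Q → x ∈ Q ∨ y ∈ Q := by
      intro x y hxy
      by_contra h
      push_neg at h
      obtain ⟨hx, hy⟩ := h
      -- the one-step G-closure of the filter generated by Q and x
      have key : ∀ x : A, x ∉ Q → ∃ q ∈ Q, d (q ⊓ x) b ∉ P := by
        intro x hx
        set F : Set A := {z | ∃ q ∈ Q, d (q ⊓ x) z ∉ P} with hF
        have hQF : Q ⊆ F := by
          intro q hq
          exact ⟨q, hq, by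
            refine hnle (le_trans (mono1 _ _ _ inf_le_left) ?_) hbot
            rw [hd1]⟩
        have hxF : x ∈ F :=
          ⟨a, haQ, by
            refine hnle (le_trans (mono1 _ _ _ inf_le_right) ?_) hbot
            rw [hd1]⟩
        by_cases hbF : b ∈ F
        · exact hbF
        · exfalso
          have hFC : F ∈ C := by
            refine ⟨?_, ?_, ?_, hQF haQ, hbF⟩
            · rintro z w ⟨q, hq, hz⟩ hzw
              exact ⟨q, hq, hnle (anti2 _ z w hzw) hz⟩
            · rintro z w ⟨q, hq, hz⟩ ⟨q', hq', hw⟩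
              refine ⟨q ⊓ q', hQmeet q q' hq hq', ?_⟩
              have hz' : d (q ⊓ q' ⊓ x) z ∉ P :=
                hnle (mono1 _ _ _ (inf_le_inf_right x inf_le_left)) hz
              have hw' : d (q ⊓ q' ⊓ x) w ∉ P :=
                hnle (mono1 _ _ _ (inf_le_inf_right x inf_le_right)) hw
              rw [hd3]
              exact hsupnot hz' hw'
            · rintro z w ⟨q, hq, hz⟩ hzw
              refine ⟨q, hq, fun h => ?_⟩
              exact (hPprime _ _ (hPup _ _ h (hd4 _ z w))).elim hz hzw
          exact hx (hQmax hFC hQF hxF)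
      obtain ⟨q, hq, hqx⟩ := key x hx
      obtain ⟨q', hq', hqy⟩ := key y hy
      set r := q ⊓ q' with hr
      have hrQ : r ∈ Q := hQmeet q q' hq hq'
      have hrx : d (r ⊓ x) b ∉ P :=
        hnle (mono1 _ _ _ (inf_le_inf_right x inf_le_left)) hqx
      have hry : d (r ⊓ y) b ∉ P :=
        hnle (mono1 _ _ _ (inf_le_inf_right y inf_le_right)) hqy
      have hmem : r ⊓ (x ⊔ y) ∈ Q := hQmeet r (x ⊔ y) hrQ hxy
      have : d (r ⊓ (x ⊔ y)) b ∉ P := by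
        rw [inf_sup_left, hd2]
        exact hsupnot hrx hry
      exact hbQ (hQG _ b hmem this)
    refine ⟨Q, ⟨⟨⟨a, haQ⟩, hQup, hQmeet⟩, ?_, hQprime⟩, ?_, haQ, hbQ⟩
    · intro h
      exact hbQ (h ▸ Set.mem_univ b)
    · intro x y hxQ hyQ
      by_contra h
      exact hyQ (hQG x y hxQ h)
  · rintro ⟨Q, _, hS, haQ, hbQ⟩
    exact hS a b haQ hbQ
end

section
/- Let A be a WD-algebra, X(A) its set of prime filters, and σ : A → P(X(A)) the Stone map, σ(a) = { P ∈ X(A) : a ∈ P }. Then σ is injective, σ(0) = ∅, σ(1) = X(A), σ(a ∧ b) = σ(a) ∩ σ(b), σ(a ∨ b) = σ(a) ∪ σ(b), and σ(a ← b) = σ(a) ⇐_{S_A} σ(b) for all a, b ∈ A. Hence every WD-algebra embeds into the WD-algebra of upward-closed subsets of its canonical WD-frame (X(A), ⊆, S_A). -/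
lemma prime_ext {A : Type*} [DistribLattice A] (r : A → A → Prop)
    (hle : ∀ x y : A, x ≤ y → r x y)
    (htrans : ∀ x y z : A, r x y → r y z → r x z)
    (hjoin : ∀ x y z : A, r x z → r y z → r (x ⊔ y) z)
    (hmeet : ∀ x y z : A, r x y → r x z → r x (y ⊓ z))
    (a b : A) (hab : ¬ r a b) :
    ∃ Q : Set A, IsPrimeFilter Q ∧ a ∈ Q ∧ b ∉ Q ∧ ∀ x y : A, x ∈ Q → r x y → y ∈ Q := by
  set S : Set (Set A) := { F | a ∈ F ∧ (∀ x y : A, x ∈ F → r x y → y ∈ F) ∧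
      (∀ x y : A, x ∈ F → y ∈ F → x ⊓ y ∈ F) ∧ ∀ x ∈ F, ¬ r x b } with hS
  have hQ0 : {y : A | r a y} ∈ S := by
    refine ⟨hle a a le_rfl, fun x y hx hxy => htrans a x y hx hxy,
      fun x y hx hy => hmeet a x y hx hy, fun x hx hxb => hab (htrans a x b hx hxb)⟩
  have hchainU : ∀ c ⊆ S, IsChain (· ⊆ ·) c → c.Nonempty →
      ∃ ub ∈ S, ∀ s ∈ c, s ⊆ ub := by
    intro c hcS hchain hcne
    refine ⟨⋃₀ c, ⟨?_, ?_, ?_, ?_⟩, fun s hs => Set.subset_sUnion_of_mem hs⟩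
    · obtain ⟨s, hs⟩ := hcne
      exact ⟨s, hs, (hcS hs).1⟩
    · rintro x y ⟨s, hs, hxs⟩ hxy
      exact ⟨s, hs, (hcS hs).2.1 x y hxs hxy⟩
    · rintro x y ⟨s, hs, hxs⟩ ⟨t, ht, hyt⟩
      rcases hchain.total hs ht with h | h
      · exact ⟨t, ht, (hcS ht).2.2.1 x y (h hxs) hyt⟩
      · exact ⟨s, hs, (hcS hs).2.2.1 x y hxs (h hyt)⟩
    · rintro x ⟨s, hs, hxs⟩
      exact (hcS hs).2.2.2 x hxs
  obtain ⟨F, hQ0F, hFS, hFmax⟩ := zorn_subset_nonempty S hchainU _ hQ0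
  obtain ⟨haF, hrF, hmF, hbF⟩ := hFS
  have hbnot : b ∉ F := fun hb => hbF b hb (hle b b le_rfl)
  have hup : ∀ x y : A, x ∈ F → x ≤ y → y ∈ F := fun x y hx hxy => hrF x y hx (hle x y hxy)
  refine ⟨F, ⟨⟨⟨a, haF⟩, hup, hmF⟩, fun h => hbnot (h ▸ Set.mem_univ b), ?_⟩, haF, hbnot,
    hrF⟩
  -- primality
  intro x y hxy
  by_contra h
  push_neg at h
  obtain ⟨hx, hy⟩ := h
  -- extension by an element z ∉ F
  have key : ∀ z : A, z ∉ F → x ⊔ y ∈ F → ∃ f ∈ F, r (f ⊓ z) b := by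
    intro z hz _
    set Fz : Set A := { w | ∃ f ∈ F, r (f ⊓ z) w } with hFz
    have hFsub : F ⊆ Fz := fun f hf => ⟨f, hf, hle _ _ inf_le_left⟩
    have hzFz : z ∈ Fz := ⟨x ⊔ y, hxy, hle _ _ inf_le_right⟩
    have hne : Fz ≠ F := fun h => hz (h ▸ hzFz)
    have h1 : a ∈ Fz := hFsub haF
    have h2 : ∀ u v : A, u ∈ Fz → r u v → v ∈ Fz := by
      rintro u v ⟨f, hf, hfu⟩ huv; exact ⟨f, hf, htrans _ _ _ hfu huv⟩
    have h3 : ∀ u v : A, u ∈ Fz → v ∈ Fz → u ⊓ v ∈ Fz := by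
      rintro u v ⟨f, hf, hfu⟩ ⟨g, hg, hgv⟩
      refine ⟨f ⊓ g, hmF f g hf hg, hmeet _ _ _ ?_ ?_⟩
      · exact htrans _ _ _ (hle _ _ (by gcongr; exact inf_le_left)) hfu
      · exact htrans _ _ _ (hle _ _ (by gcongr; exact inf_le_right)) hgv
    by_contra hcon
    push_neg at hcon
    have : Fz ∈ S := ⟨h1, h2, h3, by
      rintro w ⟨f, hf, hfw⟩ hwb
      exact hcon f hf (htrans _ _ _ hfw hwb)⟩
    exact hne (le_antisymm (hFmax this hFsub) hFsub)
  obtain ⟨f, hf, hfx⟩ := key x hx hxy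
  obtain ⟨g, hg, hgy⟩ := key y hy hxy
  have h1 : r ((f ⊓ g) ⊓ x) b := htrans _ _ _ (hle _ _ (by gcongr; exact inf_le_left)) hfx
  have h2 : r ((f ⊓ g) ⊓ y) b := htrans _ _ _ (hle _ _ (by gcongr; exact inf_le_right)) hgy
  have h3 : r ((f ⊓ g) ⊓ (x ⊔ y)) b := by
    rw [inf_sup_left]; exact hjoin _ _ _ h1 h2
  exact hbF _ (hmF _ _ (hmF f g hf hg) hxy) h3

theorem WD_representation {A : Type*} [DistribLattice A] [BoundedOrder A] (d : A → A → A)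
(hd1 : ∀ a : A, d a a = ⊥)
    (hd2 : ∀ a b c : A, d (a ⊔ b) c = d a c ⊔ d b c)
    (hd3 : ∀ a b c : A, d a (b ⊓ c) = d a b ⊔ d a c)
    (hd4 : ∀ a b c : A, d a c ≤ d a b ⊔ d b c)
    (σ : A → Set {P : Set A // IsPrimeFilter P})
    (hσ : ∀ a : A, σ a = {P : {P : Set A // IsPrimeFilter P} | a ∈ P.1}) :
    Function.Injective σ ∧
    σ ⊥ = ∅ ∧
    σ ⊤ = Set.univ ∧
    (∀ a b : A, σ (a ⊓ b) = σ a ∩ σ b) ∧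
    (∀ a b : A, σ (a ⊔ b) = σ a ∪ σ b) ∧
    (∀ a b : A, σ (d a b) = leftS (fun P Q => SRel d P.1 Q.1) (σ a) (σ b)) := by

  constructor
  · -- injectivity
    intro a b hab
    by_contra hne
    have key : ∀ x y : A, ¬ x ≤ y → σ x ≠ σ y := by
      intro x y hxy hσeq
      obtain ⟨Q, hQ, hxQ, hyQ, -⟩ := prime_ext (· ≤ ·) (fun _ _ h => h)
        (fun _ _ _ => le_trans) (fun _ _ _ => sup_le) (fun _ _ _ => le_inf) x y hxy
      have h1 : (⟨Q, hQ⟩ : {P : Set A // IsPrimeFilter P}) ∈ σ x := by rw [hσ]; exact hxQ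
      rw [hσeq, hσ] at h1
      exact hyQ h1
    by_cases h : a ≤ b
    · by_cases h' : b ≤ a
      · exact hne (le_antisymm h h')
      · exact key b a h' hab.symm
    · exact key a b h hab
  have hbot : ∀ P : {P : Set A // IsPrimeFilter P}, (⊥ : A) ∉ P.1 := by
    intro P hb
    exact P.2.2.1 (Set.eq_univ_of_forall fun x => P.2.1.2.1 ⊥ x hb bot_le)
  refine ⟨?_, ?_, ?_, ?_, ?_⟩
  · rw [hσ]
    ext P
    simp only [Set.mem_setOf_eq, Set.mem_empty_iff_false, iff_false]
    exact hbot P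
  · rw [hσ]
    ext P
    simp only [Set.mem_setOf_eq, Set.mem_univ, iff_true]
    obtain ⟨x, hx⟩ := P.2.1.1
    exact P.2.1.2.1 x ⊤ hx le_top
  · intro a b
    rw [hσ, hσ, hσ]
    ext P
    simp only [Set.mem_setOf_eq, Set.mem_inter_iff]
    constructor
    · intro h
      exact ⟨P.2.1.2.1 _ a h inf_le_left, P.2.1.2.1 _ b h inf_le_right⟩
    · rintro ⟨ha, hb⟩
      exact P.2.1.2.2 a b ha hb
  · intro a b
    rw [hσ, hσ, hσ]
    ext P
    simp only [Set.mem_setOf_eq, Set.mem_union]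
    constructor
    · intro h
      exact P.2.2.2 a b h
    · rintro (h | h)
      · exact P.2.1.2.1 a _ h le_sup_left
      · exact P.2.1.2.1 b _ h le_sup_right
  · intro a b
    rw [hσ, hσ, hσ]
    ext P
    simp only [Set.mem_setOf_eq, leftS, SRel]
    constructor
    · intro hdab
      set r : A → A → Prop := fun x y => d x y ∉ P.1 with hr
      have hP := P.2
      have hPup := hP.1.2.1
      have hPprime := hP.2.2
      have hle : ∀ x y : A, x ≤ y → r x y := by
        intro x y hxy
        have : d x y = ⊥ := by
          have h1 : d (x ⊔ y) y = d x y ⊔ d y y := hd2 x y y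
          rw [sup_eq_right.mpr hxy, hd1] at h1
          simpa using h1.symm
        rw [hr]; simp only [this]
        exact hbot P
      have htrans : ∀ x y z : A, r x y → r y z → r x z := by
        intro x y z hxy hyz hxz
        have := hPup _ _ hxz (hd4 x y z)
        rcases hPprime _ _ this with h | h
        · exact hxy h
        · exact hyz h
      have hjoin : ∀ x y z : A, r x z → r y z → r (x ⊔ y) z := by
        intro x y z hxz hyz h
        rw [hd2] at h
        rcases hPprime _ _ h with h' | h'
        · exact hxz h'
        · exact hyz h'
      have hmeet : ∀ x y z : A, r x y → r x z → r x (y ⊓ z) := by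
        intro x y z hxy hxz h
        rw [hd3] at h
        rcases hPprime _ _ h with h' | h'
        · exact hxy h'
        · exact hxz h'
      obtain ⟨Q, hQ, haQ, hbQ, hQcl⟩ := prime_ext r hle htrans hjoin hmeet a b
        (by rw [hr]; simp only [not_not]; exact hdab)
      refine ⟨⟨Q, hQ⟩, ?_, haQ, hbQ⟩
      intro x y hxQ hyQ
      by_contra hxy
      exact hyQ (hQcl x y hxQ hxy)
    · rintro ⟨Q, hSQ, haQ, hbQ⟩
      exact hSQ a b haQ hbQ
end

section
/- Let A be a WD-algebra. The inequality a ≤ b ∨ (a ← b) holds for all a, b ∈ A if and only if the relation S_A is reflexive on prime filters, i.e., (P, P) ∈ S_A for every prime filter P of A. -/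
theorem Rstar_iff_reflexive {A : Type*} [DistribLattice A] [BoundedOrder A] (d : A → A → A)
(hd1 : ∀ a : A, d a a = ⊥)
    (hd2 : ∀ a b c : A, d (a ⊔ b) c = d a c ⊔ d b c)
    (hd3 : ∀ a b c : A, d a (b ⊓ c) = d a b ⊔ d a c)
    (hd4 : ∀ a b c : A, d a c ≤ d a b ⊔ d b c)
    :
    (∀ a b : A, a ≤ b ⊔ d a b) ↔ (∀ P : Set A, IsPrimeFilter P → SRel d P P) := by
  constructor
  · intro h P hP x y hx hy
    obtain ⟨⟨_, hup, _⟩, _, hprime⟩ := hP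
    have := hup x (y ⊔ d x y) hx (h x y)
    rcases hprime y (d x y) this with h1 | h1
    · exact absurd h1 hy
    · exact h1
  · intro h a b
    by_contra hab
    obtain ⟨J, hJprime, hIJ, hdisj⟩ :=
      DistribLattice.prime_ideal_of_disjoint_filter_ideal
        (F := Order.PFilter.principal a) (I := Order.Ideal.principal (b ⊔ d a b))
        (by
          rw [Set.disjoint_left]
          intro x hxF hxI
          exact hab (le_trans hxF hxI))
    have haJ : a ∉ (J : Set A) := Set.disjoint_left.1 hdisj (le_refl a)
    have hbJ : b ∈ J := hIJ (Order.Ideal.mem_principal.2 le_sup_left)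
    have hdJ : d a b ∈ J := hIJ (Order.Ideal.mem_principal.2 le_sup_right)
    have hP : IsPrimeFilter ((J : Set A)ᶜ) := by
      refine ⟨⟨⟨a, haJ⟩, ?_, ?_⟩, ?_, ?_⟩
      · intro x y hx hxy hy
        exact hx (J.lower hxy hy)
      · intro x y hx hy hxy
        rcases hJprime.mem_or_mem hxy with h1 | h1
        · exact hx h1
        · exact hy h1
      · intro heq
        have : (⊥ : A) ∈ ((J : Set A)ᶜ) := heq ▸ Set.mem_univ _
        exact this J.bot_mem
      · intro x y hxy
        by_contra hc
        push_neg at hc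
        obtain ⟨hx, hy⟩ := hc
        simp only [Set.mem_compl_iff, SetLike.mem_coe, not_not] at hx hy hxy
        exact hxy (J.sup_mem hx hy)
    have := h _ hP a b haJ (by simp [hbJ])
    exact this (by simpa using hdJ)
end

section
/- Let A be a WD-algebra. The inequality (a ← b) ← c ≤ a ← b holds for all a, b, c ∈ A if and only if the relation S_A is transitive on prime filters, i.e., for all prime filters P, Q, Z of A, (P, Q) ∈ S_A and (Q, Z) ∈ S_A imply (P, Z) ∈ S_A. -/
/-- Generic prime-filter existence lemma: given a "compatible" relation `r`,
there is a prime filter containing `u`, avoiding `b`, and closed under `r`. -/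
theorem exists_prime_closed {A : Type*} [DistribLattice A] (r : A → A → Prop)
    (h1 : ∀ x, r x x)
    (h2 : ∀ x y z, r x y → r y z → r x z)
    (h3 : ∀ x x' y y', r x y → r x' y' → r (x ⊓ x') (y ⊓ y'))
    (h4 : ∀ x y z, r x z → r y z → r (x ⊔ y) z)
    (h5 : ∀ x y y', y ≤ y' → r x y → r x y')
    (u b : A) (hub : ¬ r u b) :
    ∃ Z : Set A, IsPrimeFilter Z ∧ u ∈ Z ∧ b ∉ Z ∧ ∀ x y, x ∈ Z → r x y → y ∈ Z := by
  -- left monotonicity, derived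
  have rml : ∀ x x' y, x' ≤ x → r x y → r x' y := by
    intro x x' y hle hr
    have := h3 x x' y x' hr (h1 x')
    rw [inf_eq_right.mpr hle] at this
    exact h5 _ _ _ inf_le_left this
  set S : Set (Set A) :=
    {F | IsLatFilter F ∧ b ∉ F ∧ ∀ x y, x ∈ F → r x y → y ∈ F} with hS
  have hF0 : {y | r u y} ∈ S := by
    refine ⟨⟨⟨u, h1 u⟩, ?_, ?_⟩, hub, ?_⟩
    · intro x y hx hxy; exact h5 _ _ _ hxy hx
    · intro x y hx hy
      have := h3 u u x y hx hy
      rwa [inf_idem] at this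
    · intro x y hx hxy; exact h2 _ _ _ hx hxy
  have hchainub : ∀ c ⊆ S, IsChain (· ⊆ ·) c → c.Nonempty → ∃ ub ∈ S, ∀ s ∈ c, s ⊆ ub := by
    intro c hcS hchain hcne
    refine ⟨⋃₀ c, ⟨⟨?_, ?_, ?_⟩, ?_, ?_⟩, fun s hs => Set.subset_sUnion_of_mem hs⟩
    · obtain ⟨F, hF⟩ := hcne
      obtain ⟨x, hx⟩ := (hcS hF).1.1
      exact ⟨x, F, hF, hx⟩
    · rintro x y ⟨F, hF, hx⟩ hxy
      exact ⟨F, hF, (hcS hF).1.2.1 x y hx hxy⟩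
    · rintro x y ⟨F, hF, hx⟩ ⟨G, hG, hy⟩
      rcases hchain.total hF hG with h | h
      · exact ⟨G, hG, (hcS hG).1.2.2 x y (h hx) hy⟩
      · exact ⟨F, hF, (hcS hF).1.2.2 x y hx (h hy)⟩
    · rintro ⟨F, hF, hb⟩; exact (hcS hF).2.1 hb
    · rintro x y ⟨F, hF, hx⟩ hxy
      exact ⟨F, hF, (hcS hF).2.2 x y hx hxy⟩
  obtain ⟨M, hF0M, hM⟩ := zorn_subset_nonempty S hchainub _ hF0
  obtain ⟨⟨hMne, hMup, hMinf⟩, hbM, hMcl⟩ := hM.1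
  have huM : u ∈ M := hF0M (h1 u)
  -- prove primality by maximality
  have hext : ∀ x : A, x ∉ M → ∃ z ∈ M, r (z ⊓ x) b := by
    intro x hxM
    by_contra hno
    push_neg at hno
    -- the r-closure of the filter generated by M ∪ {x}
    set E : Set A := {w | ∃ z ∈ M, r (z ⊓ x) w} with hE
    have hME : M ⊆ E := by
      intro z hz
      exact ⟨z, hz, h5 _ _ _ inf_le_left (h1 (z ⊓ x))⟩
    have hxE : x ∈ E := by
      obtain ⟨z, hz⟩ := hMne
      exact ⟨z, hz, h5 _ _ _ inf_le_right (h1 (z ⊓ x))⟩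
    have hES : E ∈ S := by
      refine ⟨⟨⟨x, hxE⟩, ?_, ?_⟩, ?_, ?_⟩
      · rintro w w' ⟨z, hz, hr⟩ hww'
        exact ⟨z, hz, h5 _ _ _ hww' hr⟩
      · rintro w w' ⟨z, hz, hr⟩ ⟨z', hz', hr'⟩
        refine ⟨z ⊓ z', hMinf _ _ hz hz', ?_⟩
        have := h3 _ _ _ _ hr hr'
        have heq : z ⊓ x ⊓ (z' ⊓ x) = z ⊓ z' ⊓ x := by
          rw [inf_assoc, inf_comm x, inf_assoc, inf_idem, ← inf_assoc]
        rwa [heq] at this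
      · rintro ⟨z, hz, hr⟩; exact hno z hz hr
      · rintro w w' ⟨z, hz, hr⟩ hww'
        exact ⟨z, hz, h2 _ _ _ hr hww'⟩
    have : E = M := hM.eq_of_superset hES hME
    exact hxM (this ▸ hxE)
  refine ⟨M, ⟨⟨hMne, hMup, hMinf⟩, ?_, ?_⟩, huM, hbM, hMcl⟩
  · intro hMuniv
    exact hbM (hMuniv ▸ Set.mem_univ b)
  · intro x y hxy
    by_contra hne
    push_neg at hne
    obtain ⟨z1, hz1, hr1⟩ := hext x hne.1
    obtain ⟨z2, hz2, hr2⟩ := hext y hne.2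
    set z := z1 ⊓ z2 with hz
    have hr1' : r (z ⊓ x) b := rml _ _ _ (inf_le_inf_right x inf_le_left) hr1
    have hr2' : r (z ⊓ y) b := rml _ _ _ (inf_le_inf_right y inf_le_right) hr2
    have := h4 _ _ _ hr1' hr2'
    rw [← inf_sup_left] at this
    exact hbM (hMcl _ _ (hMinf _ _ (hMinf _ _ hz1 hz2) hxy) this)

/-- The relation `x, y ↦ d x y ∉ Q` is compatible when `Q` is a prime filter. -/
theorem rel_compat {A : Type*} [DistribLattice A] [BoundedOrder A] (d : A → A → A)
    (hd1 : ∀ a : A, d a a = ⊥)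
    (hd2 : ∀ a b c : A, d (a ⊔ b) c = d a c ⊔ d b c)
    (hd3 : ∀ a b c : A, d a (b ⊓ c) = d a b ⊔ d a c)
    (hd4 : ∀ a b c : A, d a c ≤ d a b ⊔ d b c)
    (Q : Set A) (hQ : IsPrimeFilter Q) :
    (∀ x, d x x ∉ Q) ∧ (∀ x y z : A, d x y ∉ Q → d y z ∉ Q → d x z ∉ Q) ∧
    (∀ x x' y y' : A, d x y ∉ Q → d x' y' ∉ Q → d (x ⊓ x') (y ⊓ y') ∉ Q) ∧
    (∀ x y z : A, d x z ∉ Q → d y z ∉ Q → d (x ⊔ y) z ∉ Q) ∧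
    (∀ x y y' : A, y ≤ y' → d x y ∉ Q → d x y' ∉ Q) := by
  obtain ⟨⟨hne, hup, hinf⟩, hQuniv, hprime⟩ := hQ
  have hbot : (⊥ : A) ∉ Q := by
    intro hb
    apply hQuniv
    ext x; simp only [Set.mem_univ, iff_true]
    exact hup ⊥ x hb bot_le
  have hdown : ∀ x y : A, x ≤ y → y ∉ Q → x ∉ Q := fun x y hxy hy hx => hy (hup x y hx hxy)
  have hsup : ∀ x y : A, x ∉ Q → y ∉ Q → x ⊔ y ∉ Q := by
    intro x y hx hy hxy
    rcases hprime x y hxy with h | h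
    exacts [hx h, hy h]
  -- monotonicity lemmas
  have mono1 : ∀ x x' y : A, x' ≤ x → d x' y ≤ d x y := by
    intro x x' y h
    calc d x' y ≤ d x' y ⊔ d x y := le_sup_left
    _ = d (x' ⊔ x) y := (hd2 _ _ _).symm
    _ = d x y := by rw [sup_eq_right.mpr h]
  have mono2 : ∀ x y y' : A, y ≤ y' → d x y' ≤ d x y := by
    intro x y y' h
    calc d x y' ≤ d x y ⊔ d x y' := le_sup_right
    _ = d x (y ⊓ y') := (hd3 _ _ _).symm
    _ = d x y := by rw [inf_eq_left.mpr h]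
  refine ⟨fun x => by rw [hd1]; exact hbot, ?_, ?_, ?_, ?_⟩
  · intro x y z hxy hyz
    exact hdown _ _ (hd4 x y z) (hsup _ _ hxy hyz)
  · intro x x' y y' hx hx'
    have : d (x ⊓ x') (y ⊓ y') ≤ d x y ⊔ d x' y' := by
      rw [hd3]
      exact sup_le_sup (mono1 _ _ _ inf_le_left) (mono1 _ _ _ inf_le_right)
    exact hdown _ _ this (hsup _ _ hx hx')
  · intro x y z hx hy
    rw [hd2]
    exact hsup _ _ hx hy
  · intro x y y' h hy
    exact hdown _ _ (mono2 _ _ _ h) hy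

theorem Tstar_iff_transitive {A : Type*} [DistribLattice A] [BoundedOrder A] (d : A → A → A)
(hd1 : ∀ a : A, d a a = ⊥)
    (hd2 : ∀ a b c : A, d (a ⊔ b) c = d a c ⊔ d b c)
    (hd3 : ∀ a b c : A, d a (b ⊓ c) = d a b ⊔ d a c)
    (hd4 : ∀ a b c : A, d a c ≤ d a b ⊔ d b c)
    :
    (∀ a b c : A, d (d a b) c ≤ d a b) ↔
      (∀ P Q Z : Set A, IsPrimeFilter P → IsPrimeFilter Q → IsPrimeFilter Z →
        SRel d P Q → SRel d Q Z → SRel d P Z) := by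
  constructor
  · intro hT P Q Z hP hQ hZ hPQ hQZ a b haZ hbZ
    have hdab : d a b ∈ Q := hQZ a b haZ hbZ
    have hbotQ : (⊥ : A) ∉ Q := by
      intro hb
      apply hQ.2.1
      ext x; simp only [Set.mem_univ, iff_true]
      exact hQ.1.2.1 ⊥ x hb bot_le
    have := hPQ (d a b) ⊥ hdab hbotQ
    exact hP.1.2.1 _ _ this (hT a b ⊥)
  · intro htrans a b c
    by_contra hle
    -- P : prime filter containing d (d a b) c, avoiding d a b
    obtain ⟨P, hP, huP, hbP, -⟩ :=
      exists_prime_closed (A := A) (· ≤ ·) le_refl (fun _ _ _ => le_trans)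
        (fun _ _ _ _ => inf_le_inf) (fun _ _ _ => sup_le) (fun _ _ _ h h' => h'.trans h)
        (d (d a b) c) (d a b) hle
    -- Q : prime filter with SRel d P Q and d a b ∈ Q
    obtain ⟨e1, e2, e3, e4, e5⟩ := rel_compat d hd1 hd2 hd3 hd4 P hP
    obtain ⟨Q, hQ, htQ, -, hQcl⟩ :=
      exists_prime_closed (A := A) (fun x y => d x y ∉ P) e1 e2
        (fun x x' y y' => e3 x x' y y') (fun x y z => e4 x y z) (fun x y y' => e5 x y y')
        (d a b) c (not_not_intro huP)
    have hPQ : SRel d P Q := by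
      intro x y hx hy
      by_contra hd
      exact hy (hQcl x y hx hd)
    -- Z : prime filter with SRel d Q Z, a ∈ Z, b ∉ Z
    obtain ⟨f1, f2, f3, f4, f5⟩ := rel_compat d hd1 hd2 hd3 hd4 Q hQ
    obtain ⟨Z, hZ, haZ, hbZ, hZcl⟩ :=
      exists_prime_closed (A := A) (fun x y => d x y ∉ Q) f1 f2
        (fun x x' y y' => f3 x x' y y') (fun x y z => f4 x y z) (fun x y y' => f5 x y y')
        a b (not_not_intro htQ)
    have hQZ : SRel d Q Z := by
      intro x y hx hy
      by_contra hd
      exact hy (hZcl x y hx hd)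
    exact hbP (htrans P Q Z hP hQ hZ hPQ hQZ a b haZ hbZ)
end

section
/- Let A be a WD-algebra. The inequality a ← 0 ≤ a holds for all a ∈ A if and only if for all prime filters P, Q of A, (P, Q) ∈ S_A implies Q ⊆ P. -/
theorem Bstar_iff_sub {A : Type*} [DistribLattice A] [BoundedOrder A] (d : A → A → A)
(hd1 : ∀ a : A, d a a = ⊥)
    (hd2 : ∀ a b c : A, d (a ⊔ b) c = d a c ⊔ d b c)
    (hd3 : ∀ a b c : A, d a (b ⊓ c) = d a b ⊔ d a c)
    (hd4 : ∀ a b c : A, d a c ≤ d a b ⊔ d b c)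
    :
    (∀ a : A, d a ⊥ ≤ a) ↔
      (∀ P Q : Set A, IsPrimeFilter P → IsPrimeFilter Q → SRel d P Q → Q ⊆ P) := by
  -- monotone in first argument
  have mono1 : ∀ x y z : A, x ≤ y → d x z ≤ d y z := by
    intro x y z hxy
    have h := hd2 x y z
    rw [sup_eq_right.2 hxy] at h
    rw [h]; exact le_sup_left
  -- antitone in second argument
  have anti2 : ∀ x y z : A, y ≤ z → d x z ≤ d x y := by
    intro x y z hyz
    have h := hd3 x y z
    rw [inf_eq_left.2 hyz] at h
    rw [h]; exact le_sup_right
  -- key inequality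
  have key : ∀ u v c : A, d u v ≤ d u (v ⊔ c) ⊔ d (u ⊓ c) v := by
    intro u v c
    have h1 : d u (v ⊔ u ⊓ c) = d u (v ⊔ u) ⊔ d u (v ⊔ c) := by
      rw [← hd3, sup_inf_left]
    have h2 : d u (v ⊔ u) = ⊥ := by
      have := anti2 u u (v ⊔ u) le_sup_right
      rw [hd1] at this
      exact le_bot_iff.1 this
    have h3 : d u (v ⊔ u ⊓ c) = d u (v ⊔ c) := by rw [h1, h2, bot_sup_eq]
    have h4 : d (v ⊔ u ⊓ c) v = d (u ⊓ c) v := by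
      rw [hd2, hd1, bot_sup_eq]
    calc d u v ≤ d u (v ⊔ u ⊓ c) ⊔ d (v ⊔ u ⊓ c) v := hd4 _ _ _
      _ = d u (v ⊔ c) ⊔ d (u ⊓ c) v := by rw [h3, h4]
  constructor
  · intro h P Q hP hQ hS q hq
    have hbot : (⊥ : A) ∉ Q := by
      intro hb
      exact hQ.2.1 (Set.eq_univ_of_forall fun x => hQ.1.2.1 ⊥ x hb bot_le)
    exact hP.1.2.1 _ _ (hS q ⊥ hq hbot) (h q)
  · intro h a
    by_contra hna
    -- Separate d a ⊥ from a by a prime ideal J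
    have hdisj : Disjoint ((Order.PFilter.principal (d a ⊥) : Order.PFilter A) : Set A)
        ((Order.Ideal.principal a : Order.Ideal A) : Set A) := by
      rw [Set.disjoint_left]
      intro x hx hx'
      exact hna (le_trans (Order.PFilter.mem_principal.1 hx) (Order.Ideal.mem_principal.1 hx'))
    obtain ⟨J, hJprime, hIJ, hJdisj⟩ :=
      DistribLattice.prime_ideal_of_disjoint_filter_ideal hdisj
    set P : Set A := ((J : Set A))ᶜ with hPdef
    have haJ : a ∈ J := hIJ Order.Ideal.mem_principal_self
    have hdabP : d a ⊥ ∈ P := by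
      have : d a ⊥ ∈ ((Order.PFilter.principal (d a ⊥) : Order.PFilter A) : Set A) :=
        Order.PFilter.mem_principal.2 le_rfl
      exact Set.disjoint_left.1 hJdisj this
    have haP : a ∉ P := fun hc => hc haJ
    have hPup : ∀ x y : A, x ∈ P → x ≤ y → y ∈ P := fun x y hx hxy hyJ => hx (J.lower hxy hyJ)
    have hPbot : (⊥ : A) ∉ P := fun hc => hc J.bot_mem
    have hPprime : IsPrimeFilter P := by
      refine ⟨⟨⟨d a ⊥, hdabP⟩, hPup, ?_⟩, ?_, ?_⟩
      · intro x y hx hy hxyJ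
        rcases hJprime.mem_or_mem hxyJ with hc | hc
        · exact hx hc
        · exact hy hc
      · intro hc
        exact haP (hc ▸ Set.mem_univ a)
      · intro x y hxy
        by_contra hcon
        push_neg at hcon
        have hx : x ∈ J := not_not.1 hcon.1
        have hy : y ∈ J := not_not.1 hcon.2
        exact hxy (J.sup_mem hx hy)
    -- Zorn's lemma on pairs (F, I)
    set S : Set (Set A × Set A) := {p |
      a ∈ p.1 ∧ (∀ x y : A, x ∈ p.1 → x ≤ y → y ∈ p.1) ∧
      (∀ x y : A, x ∈ p.1 → y ∈ p.1 → x ⊓ y ∈ p.1) ∧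
      (⊥ : A) ∈ p.2 ∧ (∀ x y : A, y ∈ p.2 → x ≤ y → x ∈ p.2) ∧
      (∀ x y : A, x ∈ p.2 → y ∈ p.2 → x ⊔ y ∈ p.2) ∧
      (∀ x y : A, x ∈ p.1 → y ∈ p.2 → d x y ∈ P)} with hSdef
    have hbase : (({x | a ≤ x}, {x | x ≤ (⊥ : A)}) : Set A × Set A) ∈ S := by
      refine ⟨le_rfl, ?_, ?_, le_rfl, ?_, ?_, ?_⟩
      · exact fun x y hx hxy => le_trans hx hxy
      · exact fun x y hx hy => le_inf hx hy
      · exact fun x y hy hxy => le_trans hxy hy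
      · exact fun x y hx hy => sup_le hx hy
      · intro x y hx hy
        have hyb : y = ⊥ := le_bot_iff.1 hy
        subst hyb
        exact hPup _ _ hdabP (mono1 _ _ _ hx)
    obtain ⟨m, hle, hmax⟩ := zorn_le_nonempty₀ S (fun c hcS hc y hy => by
      refine ⟨(⋃ p ∈ c, p.1, ⋃ p ∈ c, p.2), ?_, ?_⟩
      · have hpair : ∀ p q, p ∈ c → q ∈ c → p ≤ q ∨ q ≤ p := by
          intro p q hp hq
          by_cases hpq : p = q
          · exact Or.inl (hpq ▸ le_rfl)
          · exact hc hp hq hpq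
        refine ⟨?_, ?_, ?_, ?_, ?_, ?_, ?_⟩
        · exact Set.mem_biUnion hy (hcS hy).1
        · rintro x z hx hxz
          rw [Set.mem_iUnion₂] at hx ⊢
          obtain ⟨p, hp, hxp⟩ := hx
          exact ⟨p, hp, (hcS hp).2.1 _ _ hxp hxz⟩
        · rintro x z hx hz
          rw [Set.mem_iUnion₂] at hx hz ⊢
          obtain ⟨p, hp, hxp⟩ := hx
          obtain ⟨q, hq, hzq⟩ := hz
          rcases hpair p q hp hq with hle | hle
          · exact ⟨q, hq, (hcS hq).2.2.1 _ _ (hle.1 hxp) hzq⟩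
          · exact ⟨p, hp, (hcS hp).2.2.1 _ _ hxp (hle.1 hzq)⟩
        · exact Set.mem_biUnion hy (hcS hy).2.2.2.1
        · rintro x z hz hxz
          rw [Set.mem_iUnion₂] at hz ⊢
          obtain ⟨p, hp, hzp⟩ := hz
          exact ⟨p, hp, (hcS hp).2.2.2.2.1 _ _ hzp hxz⟩
        · rintro x z hx hz
          rw [Set.mem_iUnion₂] at hx hz ⊢
          obtain ⟨p, hp, hxp⟩ := hx
          obtain ⟨q, hq, hzq⟩ := hz
          rcases hpair p q hp hq with hle | hle
          · exact ⟨q, hq, (hcS hq).2.2.2.2.2.1 _ _ (hle.2 hxp) hzq⟩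
          · exact ⟨p, hp, (hcS hp).2.2.2.2.2.1 _ _ hxp (hle.2 hzq)⟩
        · rintro x z hx hz
          rw [Set.mem_iUnion₂] at hx hz
          obtain ⟨p, hp, hxp⟩ := hx
          obtain ⟨q, hq, hzq⟩ := hz
          rcases hpair p q hp hq with hle | hle
          · exact (hcS hq).2.2.2.2.2.2 _ _ (hle.1 hxp) hzq
          · exact (hcS hp).2.2.2.2.2.2 _ _ hxp (hle.2 hzq)
      · intro z hz
        exact ⟨fun x hx => Set.mem_biUnion hz hx, fun x hx => Set.mem_biUnion hz hx⟩)
      _ hbase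
    obtain ⟨hmS, hmmax⟩ := hmax
    obtain ⟨haF, hFup, hFinf, hbI, hIdown, hIsup, hFI⟩ := hmS
    set F := m.1
    set I := m.2
    -- F and I are disjoint
    have hdisjFI : ∀ x : A, x ∈ F → x ∈ I → False := by
      intro x hxF hxI
      have := hFI x x hxF hxI
      rw [hd1] at this
      exact hPbot this
    -- F ∪ I = univ
    have htotal : ∀ c : A, c ∉ F → c ∈ I := by
      intro c hcF
      by_contra hcI
      -- extension of F fails
      have hfail1 : ∃ f ∈ F, ∃ y ∈ I, d (f ⊓ c) y ∉ P := by
        by_contra hok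
        push_neg at hok
        have hp1 : (({z | ∃ f ∈ F, f ⊓ c ≤ z}, I) : Set A × Set A) ∈ S := by
          refine ⟨⟨a, haF, inf_le_left⟩, ?_, ?_, hbI, hIdown, hIsup, ?_⟩
          · rintro x y ⟨f, hf, hfc⟩ hxy
            exact ⟨f, hf, le_trans hfc hxy⟩
          · rintro x y ⟨f, hf, hfc⟩ ⟨g, hg, hgc⟩
            refine ⟨f ⊓ g, hFinf _ _ hf hg, le_inf ?_ ?_⟩
            · exact le_trans (inf_le_inf_right c inf_le_left) hfc
            · exact le_trans (inf_le_inf_right c inf_le_right) hgc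
          · rintro x y ⟨f, hf, hfc⟩ hy
            exact hPup _ _ (hok f hf y hy) (mono1 _ _ _ hfc)
        have hle1 : m ≤ (({z | ∃ f ∈ F, f ⊓ c ≤ z}, I) : Set A × Set A) :=
          ⟨fun x hx => ⟨x, hx, inf_le_left⟩, le_rfl⟩
        have := hmmax hp1 hle1
        exact hcF (this.1 ⟨a, haF, inf_le_right⟩)
      -- extension of I fails
      have hfail2 : ∃ x ∈ F, ∃ j ∈ I, d x (j ⊔ c) ∉ P := by
        by_contra hok
        push_neg at hok
        have hp2 : ((F, {w | ∃ j ∈ I, w ≤ j ⊔ c}) : Set A × Set A) ∈ S := by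
          refine ⟨haF, hFup, hFinf, ⟨⊥, hbI, bot_le⟩, ?_, ?_, ?_⟩
          · rintro x y ⟨j, hj, hjc⟩ hxy
            exact ⟨j, hj, le_trans hxy hjc⟩
          · rintro x y ⟨j, hj, hjc⟩ ⟨k, hk, hkc⟩
            refine ⟨j ⊔ k, hIsup _ _ hj hk, ?_⟩
            refine sup_le (le_trans hjc ?_) (le_trans hkc ?_)
            · exact sup_le_sup_right le_sup_left c
            · exact sup_le_sup_right le_sup_right c
          · rintro x y hx ⟨j, hj, hjc⟩
            exact hPup _ _ (hok x hx j hj) (anti2 _ _ _ hjc)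
        have hle2 : m ≤ ((F, {w | ∃ j ∈ I, w ≤ j ⊔ c}) : Set A × Set A) :=
          ⟨le_rfl, fun w hw => ⟨w, hw, le_sup_left⟩⟩
        have := hmmax hp2 hle2
        exact hcI (this.2 ⟨⊥, hbI, by simp⟩)
      obtain ⟨f, hf, y, hy, hP1⟩ := hfail1
      obtain ⟨x, hx, j, hj, hP2⟩ := hfail2
      set u := x ⊓ f
      set v := y ⊔ j
      have huF : u ∈ F := hFinf _ _ hx hf
      have hvI : v ∈ I := hIsup _ _ hy hj
      have hs : d (u ⊓ c) v ∉ P := by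
        intro hmem
        have h1 : d (u ⊓ c) v ≤ d (f ⊓ c) v := mono1 _ _ _ (inf_le_inf_right c inf_le_right)
        have h2 : d (f ⊓ c) v ≤ d (f ⊓ c) y := anti2 _ _ _ le_sup_left
        exact hP1 (hPup _ _ hmem (h1.trans h2))
      have ht : d u (v ⊔ c) ∉ P := by
        intro hmem
        have h1 : d u (v ⊔ c) ≤ d x (v ⊔ c) := mono1 _ _ _ inf_le_left
        have h2 : d x (v ⊔ c) ≤ d x (j ⊔ c) :=
          anti2 _ _ _ (sup_le_sup_right le_sup_right c)
        exact hP2 (hPup _ _ hmem (h1.trans h2))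
      have hduv : d u v ∈ P := hFI u v huF hvI
      have hsup : d u (v ⊔ c) ⊔ d (u ⊓ c) v ∈ P := hPup _ _ hduv (key u v c)
      rcases hPprime.2.2 _ _ hsup with hc1 | hc1
      · exact ht hc1
      · exact hs hc1
    -- F is a prime filter
    have hbF : (⊥ : A) ∉ F := fun hc => hdisjFI ⊥ hc hbI
    have hQprime : IsPrimeFilter F := by
      refine ⟨⟨⟨a, haF⟩, hFup, hFinf⟩, ?_, ?_⟩
      · intro hc
        exact hbF (hc ▸ Set.mem_univ ⊥)
      · intro x y hxy
        by_contra hcon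
        push_neg at hcon
        have hxI : x ∈ I := htotal x hcon.1
        have hyI : y ∈ I := htotal y hcon.2
        exact hdisjFI _ hxy (hIsup _ _ hxI hyI)
    have hSrel : SRel d P F := fun x y hx hy => hFI x y hx (htotal y hy)
    exact haP (h P F hPprime hQprime hSrel haF)
end

section
/- Let (X, ≤) be a poset and S a binary relation on X such that z ≤ x and (z, y) ∈ S imply (x, y) ∈ S. Then S is reflexive if and only if U ⊆ V ∪ (U ⇐_S V) for all upward-closed sets U, V ⊆ X. -/
theorem reflexive_iff_Rstar {X : Type*} [PartialOrder X] (S : X → X → Prop)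
    (hS : ∀ x y z : X, z ≤ x → S z y → S x y) :
    (∀ x : X, S x x) ↔
      (∀ U V : Set X, IsUpperSet U → IsUpperSet V → U ⊆ V ∪ leftS S U V) := by
  constructor
  · intro hrefl U V _ _ x hx
    by_cases hv : x ∈ V
    · exact Or.inl hv
    · exact Or.inr ⟨x, hrefl x, hx, hv⟩
  · intro h x
    have hU : IsUpperSet {y : X | x ≤ y} := fun a b hab ha => le_trans ha hab
    have hV : IsUpperSet {y : X | x < y} := fun a b hab ha => lt_of_lt_of_le ha hab
    rcases h _ _ hU hV (le_refl x) with hv | ⟨y, hsy, hxy, hnsy⟩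
    · exact absurd hv (lt_irrefl x)
    · have : y = x := by by_contra hne; exact hnsy (lt_of_le_of_ne hxy (Ne.symm hne))
      exact this ▸ hsy
end

section
/- Let (X, ≤) be a poset and S a binary relation on X such that z ≤ x and (z, y) ∈ S imply (x, y) ∈ S. Then S is transitive if and only if (U ⇐_S V) ⇐_S W ⊆ U ⇐_S V for all upward-closed sets U, V, W ⊆ X. -/
theorem transitive_iff_Tstar {X : Type*} [PartialOrder X] (S : X → X → Prop)
    (hS : ∀ x y z : X, z ≤ x → S z y → S x y) :
    (∀ x y z : X, S x y → S y z → S x z) ↔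
      (∀ U V W : Set X, IsUpperSet U → IsUpperSet V → IsUpperSet W →
        leftS S (leftS S U V) W ⊆ leftS S U V) := by
  constructor
  · rintro htrans U V W _ _ _ x ⟨y, hxy, ⟨z, hyz, hzU, hzV⟩, _⟩
    exact ⟨z, htrans x y z hxy hyz, hzU, hzV⟩
  · intro h x y z hxy hyz
    have hU : IsUpperSet (Set.Ici z) := isUpperSet_Ici z
    have hV : IsUpperSet (Set.Ioi z) := isUpperSet_Ioi z
    have hW : IsUpperSet (∅ : Set X) := fun _ _ _ h => h
    have hx : x ∈ leftS S (leftS S (Set.Ici z) (Set.Ioi z)) ∅ :=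
      ⟨y, hxy, ⟨z, hyz, le_refl z, lt_irrefl z⟩, Set.notMem_empty y⟩
    obtain ⟨w, hxw, hzw, hwz⟩ := h _ _ _ hU hV hW hx
    have : w = z := by
      by_contra hne
      exact hwz (lt_of_le_of_ne hzw (Ne.symm hne))
    exact this ▸ hxw
end

section
/- Let (X, ≤) be a poset and S a binary relation on X such that z ≤ x and (z, y) ∈ S imply (x, y) ∈ S. Then the following are equivalent: (i) for all x, y ∈ X, (x, y) ∈ S implies y ≤ x; (ii) U ⇐_S ∅ ⊆ U for every upward-closed set U ⊆ X. -/
theorem Sle_iff_Bstar {X : Type*} [PartialOrder X] (S : X → X → Prop)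
    (hS : ∀ x y z : X, z ≤ x → S z y → S x y) :
    (∀ x y : X, S x y → y ≤ x) ↔
      (∀ U : Set X, IsUpperSet U → leftS S U ∅ ⊆ U) := by
  constructor
  · rintro h U hU x ⟨y, hxy, hyU, -⟩
    exact hU (h x y hxy) hyU
  · intro h x y hxy
    have := h {z | y ≤ z} (fun a b hab ha => ha.trans hab) ⟨y, hxy, le_refl y, not_false⟩
    exact this
end

section
/- Let (X, ≤) be a poset, and let R and S be binary relations on X such that: x ≤ z and (z, y) ∈ R imply (x, y) ∈ R; z ≤ x and (z, y) ∈ S imply (x, y) ∈ S; and S = R⁻¹ (i.e., (x, y) ∈ S iff (y, x) ∈ R). Then for all upward-closed sets U, V ⊆ X: U ∩ ((U ⇒_R V) ⇐_S ∅) ⊆ V and U ⊆ V ∪ (X ⇒_R (U ⇐_S V)). -/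
/-- U ⇒_R V = { x : ∀ y, (x,y) ∈ R and y ∈ U imply y ∈ V }. -/
def impR {X : Type*} (R : X → X → Prop) (U V : Set X) : Set X :=
  { x : X | ∀ y : X, R x y → y ∈ U → y ∈ V }

theorem WHB_frame_algebra {X : Type*} [PartialOrder X] (R S : X → X → Prop)
    (hR : ∀ x y z : X, x ≤ z → R z y → R x y)
    (hS : ∀ x y z : X, z ≤ x → S z y → S x y)
    (hRS : ∀ x y : X, S x y ↔ R y x)
    (U V : Set X) (hU : IsUpperSet U) (hV : IsUpperSet V) :
    U ∩ leftS S (impR R U V) ∅ ⊆ V ∧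
    U ⊆ V ∪ impR R Set.univ (leftS S U V) := by
  constructor
  · rintro x ⟨hxU, y, hSxy, hy, -⟩
    exact hy x ((hRS x y).mp hSxy) hxU
  · intro x hxU
    by_cases hxV : x ∈ V
    · exact Or.inl hxV
    · exact Or.inr fun y hRxy _ => ⟨x, (hRS y x).mpr hRxy, hxU, hxV⟩
end

section
/- Let A be a DWH-algebra. The inequality a ∧ ((a → b) ← 0) ≤ b holds for all a, b ∈ A if and only if for all prime filters P, Q of A, (P, Q) ∈ S_A implies (Q, P) ∈ R_A. -/
/-- The relation R_A: (P,Q) ∈ R_A iff for all a b, a → b ∈ P and a ∈ Q imply b ∈ Q. -/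
def RRel {A : Type*} (i : A → A → A) (P Q : Set A) : Prop :=
  ∀ a b : A, i a b ∈ P → a ∈ Q → b ∈ Q

/-- Separation by a prime filter closed under a lattice-compatible preorder `r`. -/
lemma prime_sep {A : Type*} [DistribLattice A] (r : A → A → Prop)
    (hrefl : ∀ a, r a a)
    (htrans : ∀ a b c, r a b → r b c → r a c)
    (hle : ∀ a b : A, a ≤ b → r a b)
    (hinf : ∀ a b a' b', r a b → r a' b' → r (a ⊓ a') (b ⊓ b'))
    (hsup : ∀ a b a' b', r a b → r a' b' → r (a ⊔ a') (b ⊔ b'))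
    (x y : A) (hxy : ¬ r x y) :
    ∃ Q : Set A, IsPrimeFilter Q ∧ (∀ u v, u ∈ Q → r u v → v ∈ Q) ∧ x ∈ Q ∧ y ∉ Q := by
  set S : Set (Set A) :=
    {F | x ∈ F ∧ y ∉ F ∧ (∀ u v, u ∈ F → r u v → v ∈ F) ∧
      (∀ u v, u ∈ F → v ∈ F → u ⊓ v ∈ F)} with hS
  have hF0 : {v | r x v} ∈ S := by
    refine ⟨hrefl x, hxy, fun u v hu huv => htrans _ _ _ hu huv, fun u v hu hv => ?_⟩
    have := hinf _ _ _ _ hu hv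
    simpa using this
  obtain ⟨M, -, hMS, hMmax⟩ := zorn_subset_nonempty S (fun c hcS hchain ⟨F, hF⟩ => by
    refine ⟨⋃₀ c, ⟨Set.mem_sUnion.2 ⟨F, hF, (hcS hF).1⟩, ?_, ?_, ?_⟩,
      fun s hs => Set.subset_sUnion_of_mem hs⟩
    · rintro ⟨G, hG, hyG⟩; exact (hcS hG).2.1 hyG
    · rintro u v ⟨G, hG, huG⟩ huv; exact ⟨G, hG, (hcS hG).2.2.1 u v huG huv⟩
    · rintro u v ⟨G, hG, huG⟩ ⟨H, hH, hvH⟩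
      rcases hchain.total hG hH with h | h
      · exact ⟨H, hH, (hcS hH).2.2.2 u v (h huG) hvH⟩
      · exact ⟨G, hG, (hcS hG).2.2.2 u v huG (h hvH)⟩) _ hF0
  obtain ⟨hxM, hyM, hMr, hMinf⟩ := hMS
  -- key: if u ∉ M then there is m ∈ M with r (m ⊓ u) y
  have key : ∀ u : A, u ∉ M → ∃ m ∈ M, r (m ⊓ u) y := by
    intro u huM
    by_contra hno
    push_neg at hno
    set Fu : Set A := {w | ∃ m ∈ M, r (m ⊓ u) w} with hFu
    have hFuS : Fu ∈ S := by
      refine ⟨⟨x, hxM, hle _ _ inf_le_left⟩, ?_, ?_, ?_⟩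
      · rintro ⟨m, hm, hrm⟩; exact hno m hm hrm
      · rintro w w' ⟨m, hm, hrm⟩ hww'; exact ⟨m, hm, htrans _ _ _ hrm hww'⟩
      · rintro w w' ⟨m, hm, hrm⟩ ⟨m', hm', hrm'⟩
        refine ⟨m ⊓ m', hMinf _ _ hm hm', ?_⟩
        have h1 : r ((m ⊓ u) ⊓ (m' ⊓ u)) (w ⊓ w') := hinf _ _ _ _ hrm hrm'
        exact htrans _ _ _ (hle _ _ (le_inf (inf_le_inf_right u inf_le_left)
          (inf_le_inf_right u inf_le_right))) h1
    have hMFu : M ⊆ Fu := fun m hm => ⟨m, hm, hle _ _ inf_le_left⟩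
    have huFu : u ∈ Fu := ⟨x, hxM, hle _ _ inf_le_right⟩
    have heq : Fu = M := le_antisymm (hMmax hFuS hMFu) hMFu
    exact huM (heq ▸ huFu)
  refine ⟨M, ⟨⟨⟨x, hxM⟩, fun a b ha hab => hMr a b ha (hle _ _ hab), hMinf⟩,
    fun h => hyM (h ▸ Set.mem_univ y), ?_⟩, hMr, hxM, hyM⟩
  intro u v huv
  by_contra hcon
  push_neg at hcon
  obtain ⟨m, hm, hrm⟩ := key u hcon.1
  obtain ⟨m', hm', hrm'⟩ := key v hcon.2
  have h1 : r ((m ⊓ u) ⊔ (m' ⊓ v)) (y ⊔ y) := hsup _ _ _ _ hrm hrm'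
  rw [sup_idem] at h1
  have h2 : (m ⊓ m') ⊓ (u ⊔ v) ≤ (m ⊓ u) ⊔ (m' ⊓ v) := by
    rw [inf_sup_left]
    exact sup_le_sup (inf_le_inf_right u inf_le_left)
      (inf_le_inf_right v inf_le_right)
  have h3 : r ((m ⊓ m') ⊓ (u ⊔ v)) y := htrans _ _ _ (hle _ _ h2) h1
  exact hyM (hMr _ _ (hMinf _ _ (hMinf _ _ hm hm') huv) h3)

theorem E1_iff_S_sub_Rinv {A : Type*} [DistribLattice A] [BoundedOrder A]
    (i : A → A → A) (d : A → A → A)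
(hi1 : ∀ a : A, i a a = ⊤)
    (hi2 : ∀ a b c : A, i a (b ⊓ c) = i a b ⊓ i a c)
    (hi3 : ∀ a b c : A, i (a ⊔ b) c = i a c ⊓ i b c)
    (hi4 : ∀ a b c : A, i a b ⊓ i b c ≤ i a c)
(hd1 : ∀ a : A, d a a = ⊥)
    (hd2 : ∀ a b c : A, d (a ⊔ b) c = d a c ⊔ d b c)
    (hd3 : ∀ a b c : A, d a (b ⊓ c) = d a b ⊔ d a c)
    (hd4 : ∀ a b c : A, d a c ≤ d a b ⊔ d b c)
    :
    (∀ a b : A, a ⊓ d (i a b) ⊥ ≤ b) ↔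
      (∀ P Q : Set A, IsPrimeFilter P → IsPrimeFilter Q → SRel d P Q → RRel i Q P) := by
  -- monotonicity facts for d
  have dmono1 : ∀ a a' c : A, a ≤ a' → d a c ≤ d a' c := by
    intro a a' c h
    have : d a' c = d a c ⊔ d a' c := by rw [← hd2, sup_eq_right.2 h]
    rw [this]; exact le_sup_left
  have dmono2 : ∀ a c c' : A, c ≤ c' → d a c' ≤ d a c := by
    intro a c c' h
    have heq : d a c' ⊔ d a c = d a c := by rw [← hd3, inf_eq_right.2 h]
    calc d a c' ≤ d a c' ⊔ d a c := le_sup_left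
      _ = d a c := heq
  constructor
  · -- E1 ⇒ relational condition
    intro hE1 P Q hP hQ hSPQ a b hiQ haP
    have hbotQ : (⊥ : A) ∉ Q := by
      intro hbot
      exact hQ.2.1 (Set.eq_univ_of_forall fun z => hQ.1.2.1 ⊥ z hbot bot_le)
    have hdP : d (i a b) ⊥ ∈ P := hSPQ _ _ hiQ hbotQ
    exact hP.1.2.1 _ b (hP.1.2.2 a _ haP hdP) (hE1 a b)
  · -- relational condition ⇒ E1
    intro h a b
    by_contra hnle
    -- Step 1: prime filter P with a ⊓ d (i a b) ⊥ ∈ P, b ∉ P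
    obtain ⟨P, hP, -, hxP, hbP⟩ := prime_sep (A := A) (· ≤ ·)
      (fun a => le_refl a) (fun _ _ _ => le_trans) (fun _ _ h => h)
      (fun _ _ _ _ => inf_le_inf) (fun _ _ _ _ => sup_le_sup)
      (a ⊓ d (i a b) ⊥) b hnle
    have haP : a ∈ P := hP.1.2.1 _ a hxP inf_le_left
    have hdiP : d (i a b) ⊥ ∈ P := hP.1.2.1 _ _ hxP inf_le_right
    have hbotP : (⊥ : A) ∉ P := by
      intro hbot
      exact hP.2.1 (Set.eq_univ_of_forall fun z => hP.1.2.1 ⊥ z hbot bot_le)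
    have hPnotin : ∀ {u v : A}, u ≤ v → d u v ∉ P := by
      intro u v huv hin
      have h1 : d u v ≤ d v v := dmono1 _ _ _ huv
      rw [hd1] at h1
      exact hbotP (hP.1.2.1 _ _ hin h1)
    -- the preorder r u v := d u v ∉ P
    set r : A → A → Prop := fun u v => d u v ∉ P with hr
    have hnotP_mono : ∀ {u v : A}, u ≤ v → v ∉ P → u ∉ P :=
      fun {u v} huv hv hu => hv (hP.1.2.1 _ _ hu huv)
    have hnotP_sup : ∀ {u v : A}, u ∉ P → v ∉ P → u ⊔ v ∉ P := by
      intro u v hu hv hsup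
      rcases hP.2.2 u v hsup with h1 | h1
      · exact hu h1
      · exact hv h1
    -- Step 2: prime filter Q, r-closed, containing i a b, avoiding ⊥
    obtain ⟨Q, hQ, hQr, hiQ, hbotQ⟩ := prime_sep (A := A) r
      (fun u => by simpa [hr, hd1] using hbotP)
      (fun u v w huv hvw hin => by
        have := hP.1.2.1 _ _ hin (hd4 u v w)
        rcases hP.2.2 _ _ this with h1 | h1
        · exact huv h1
        · exact hvw h1)
      (fun u v huv => hPnotin huv)
      (fun u v u' v' huv hu'v' => by
        have hle1 : d (u ⊓ u') (v ⊓ v') ≤ d u v ⊔ d u' v' := by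
          rw [hd3]
          exact sup_le_sup (dmono1 _ _ _ inf_le_left) (dmono1 _ _ _ inf_le_right)
        exact hnotP_mono hle1 (hnotP_sup huv hu'v'))
      (fun u v u' v' huv hu'v' => by
        have hle1 : d (u ⊔ u') (v ⊔ v') ≤ d u v ⊔ d u' v' := by
          rw [hd2]
          exact sup_le_sup (dmono2 _ _ _ le_sup_left) (dmono2 _ _ _ le_sup_right)
        exact hnotP_mono hle1 (hnotP_sup huv hu'v'))
      (i a b) ⊥ (by simpa [hr] using hdiP)
    have hSPQ : SRel d P Q := by
      intro u v huQ hvQ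
      by_contra hd
      exact hvQ (hQr u v huQ hd)
    exact hbP (h P Q hP hQ hSPQ a b hiQ haP)
end

section
/- Let A be a DWH-algebra. The inequality a ≤ b ∨ (1 → (a ← b)) holds for all a, b ∈ A if and only if for all prime filters P, Q of A, (P, Q) ∈ R_A implies (Q, P) ∈ S_A. -/
/-- Plain prime filter separation: a filter avoiding a point extends to a prime
filter avoiding that point. -/
lemma exists_prime_filter_sep {A : Type*} [DistribLattice A]
    (F : Set A) (hF : IsLatFilter F) (m : A) (hm : m ∉ F) :
    ∃ Q : Set A, IsPrimeFilter Q ∧ F ⊆ Q ∧ m ∉ Q := by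
  set 𝒮 : Set (Set A) := {G | IsLatFilter G ∧ F ⊆ G ∧ m ∉ G} with h𝒮
  have hub : ∀ c ⊆ 𝒮, IsChain (· ⊆ ·) c → c.Nonempty → ∃ ub ∈ 𝒮, ∀ s ∈ c, s ⊆ ub := by
    intro c hc hchain hcne
    obtain ⟨G0, hG0⟩ := hcne
    refine ⟨⋃₀ c, ?_, fun s hs => Set.subset_sUnion_of_mem hs⟩
    refine ⟨⟨?_, ?_, ?_⟩, ?_, ?_⟩
    · obtain ⟨x, hx⟩ := (hc hG0).1.1; exact ⟨x, G0, hG0, hx⟩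
    · rintro x y ⟨G, hG, hx⟩ hxy; exact ⟨G, hG, (hc hG).1.2.1 _ _ hx hxy⟩
    · rintro x y ⟨G1, hG1, hx⟩ ⟨G2, hG2, hy⟩
      rcases hchain.total hG1 hG2 with h | h
      · exact ⟨G2, hG2, (hc hG2).1.2.2 _ _ (h hx) hy⟩
      · exact ⟨G1, hG1, (hc hG1).1.2.2 _ _ hx (h hy)⟩
    · exact (hc hG0).2.1.trans (Set.subset_sUnion_of_mem hG0)
    · rintro ⟨G, hG, hx⟩; exact (hc hG).2.2 hx
  obtain ⟨Q, hFQ, hQ𝒮, hmax⟩ := zorn_subset_nonempty 𝒮 hub F ⟨hF, subset_rfl, hm⟩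
  obtain ⟨⟨hQne, hQup, hQmeet⟩, hFQ', hmQ⟩ := hQ𝒮
  refine ⟨Q, ⟨⟨hQne, hQup, hQmeet⟩, ?_, ?_⟩, hFQ, hmQ⟩
  · intro h; exact hmQ (h ▸ Set.mem_univ m)
  · intro u v huv
    by_contra hc
    push_neg at hc
    obtain ⟨hu, hv⟩ := hc
    -- extension of Q by an element w
    have key : ∀ w, w ∉ Q → ∃ q ∈ Q, q ⊓ w ≤ m := by
      intro w hw
      set E : Set A := {y | ∃ q ∈ Q, q ⊓ w ≤ y} with hE
      obtain ⟨q0, hq0⟩ := hQne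
      have hwE : w ∈ E := ⟨q0, hq0, inf_le_right⟩
      have hQE : Q ⊆ E := fun q hq => ⟨q, hq, inf_le_left⟩
      have hEfil : IsLatFilter E := by
        refine ⟨⟨w, hwE⟩, ?_, ?_⟩
        · rintro x y ⟨q, hq, hle⟩ hxy; exact ⟨q, hq, hle.trans hxy⟩
        · rintro x y ⟨q1, hq1, h1⟩ ⟨q2, hq2, h2⟩
          exact ⟨q1 ⊓ q2, hQmeet _ _ hq1 hq2,
            le_inf ((inf_le_inf_right w inf_le_left).trans h1)
              ((inf_le_inf_right w inf_le_right).trans h2)⟩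
      by_contra hno
      push_neg at hno
      have hmE : m ∉ E := by rintro ⟨q, hq, hle⟩; exact hno q hq hle
      have hE𝒮 : E ∈ 𝒮 := ⟨hEfil, hFQ'.trans hQE, hmE⟩
      exact hw (hmax hE𝒮 hQE hwE)
    obtain ⟨q1, hq1, h1⟩ := key u hu
    obtain ⟨q2, hq2, h2⟩ := key v hv
    set q : A := q1 ⊓ q2 ⊓ (u ⊔ v) with hq
    have hqQ : q ∈ Q := hQmeet _ _ (hQmeet _ _ hq1 hq2) huv
    have : q ≤ m := by
      have e1 : q ⊓ u ≤ m :=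
        (inf_le_inf_right u (le_trans inf_le_left inf_le_left)).trans h1
      have e2 : q ⊓ v ≤ m :=
        (inf_le_inf_right v (le_trans inf_le_left inf_le_right)).trans h2
      calc q = q ⊓ (u ⊔ v) := (inf_eq_left.mpr inf_le_right).symm
      _ = q ⊓ u ⊔ q ⊓ v := inf_sup_left q u v
      _ ≤ m := sup_le e1 e2
    exact hmQ (hQup _ _ hqQ this)

/-- Prime filter separation preserving closure under the relation induced by `i` and `P`. -/
lemma exists_prime_filter_sep_closed {A : Type*} [DistribLattice A] [BoundedOrder A]
    (i : A → A → A)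
    (hi1 : ∀ a : A, i a a = ⊤)
    (hi2 : ∀ a b c : A, i a (b ⊓ c) = i a b ⊓ i a c)
    (hi3 : ∀ a b c : A, i (a ⊔ b) c = i a c ⊓ i b c)
    (hi4 : ∀ a b c : A, i a b ⊓ i b c ≤ i a c)
    (P : Set A) (hPtop : ⊤ ∈ P)
    (hPup : ∀ x y : A, x ∈ P → x ≤ y → y ∈ P)
    (hPmeet : ∀ x y : A, x ∈ P → y ∈ P → x ⊓ y ∈ P)
    (F : Set A) (hF : IsLatFilter F)
    (hFcl : ∀ x ∈ F, ∀ y, i x y ∈ P → y ∈ F)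
    (m : A) (hm : m ∉ F) :
    ∃ Q : Set A, IsPrimeFilter Q ∧ F ⊆ Q ∧ m ∉ Q ∧ ∀ x ∈ Q, ∀ y, i x y ∈ P → y ∈ Q := by
  have mono2 : ∀ x y z : A, y ≤ z → i x y ≤ i x z := by
    intro x y z h
    have : i x y = i x y ⊓ i x z := by rw [← hi2, inf_eq_left.mpr h]
    rw [this]; exact inf_le_right
  have anti1 : ∀ x y z : A, x ≤ y → i y z ≤ i x z := by
    intro x y z h
    have : i y z = i x z ⊓ i y z := by rw [← hi3, sup_eq_right.mpr h]
    rw [this]; exact inf_le_left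
  have itop : ∀ x y : A, x ≤ y → i x y ∈ P := by
    intro x y h
    have : i y y ≤ i x y := anti1 _ _ _ h
    rw [hi1] at this
    exact hPup _ _ hPtop this
  set 𝒮 : Set (Set A) := {G | IsLatFilter G ∧ (∀ x ∈ G, ∀ y, i x y ∈ P → y ∈ G)
      ∧ F ⊆ G ∧ m ∉ G} with h𝒮
  have hub : ∀ c ⊆ 𝒮, IsChain (· ⊆ ·) c → c.Nonempty → ∃ ub ∈ 𝒮, ∀ s ∈ c, s ⊆ ub := by
    intro c hc hchain hcne
    obtain ⟨G0, hG0⟩ := hcne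
    refine ⟨⋃₀ c, ?_, fun s hs => Set.subset_sUnion_of_mem hs⟩
    refine ⟨⟨?_, ?_, ?_⟩, ?_, ?_, ?_⟩
    · obtain ⟨x, hx⟩ := (hc hG0).1.1; exact ⟨x, G0, hG0, hx⟩
    · rintro x y ⟨G, hG, hx⟩ hxy; exact ⟨G, hG, (hc hG).1.2.1 _ _ hx hxy⟩
    · rintro x y ⟨G1, hG1, hx⟩ ⟨G2, hG2, hy⟩
      rcases hchain.total hG1 hG2 with h | h
      · exact ⟨G2, hG2, (hc hG2).1.2.2 _ _ (h hx) hy⟩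
      · exact ⟨G1, hG1, (hc hG1).1.2.2 _ _ hx (h hy)⟩
    · rintro x ⟨G, hG, hx⟩ y hy; exact ⟨G, hG, (hc hG).2.1 x hx y hy⟩
    · exact (hc hG0).2.2.1.trans (Set.subset_sUnion_of_mem hG0)
    · rintro ⟨G, hG, hx⟩; exact (hc hG).2.2.2 hx
  obtain ⟨Q, hFQ, hQ𝒮, hmax⟩ := zorn_subset_nonempty 𝒮 hub F ⟨hF, hFcl, subset_rfl, hm⟩
  obtain ⟨⟨hQne, hQup, hQmeet⟩, hQcl, hFQ', hmQ⟩ := hQ𝒮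
  refine ⟨Q, ⟨⟨hQne, hQup, hQmeet⟩, ?_, ?_⟩, hFQ, hmQ, hQcl⟩
  · intro h; exact hmQ (h ▸ Set.mem_univ m)
  · intro u v huv
    by_contra hc
    push_neg at hc
    obtain ⟨hu, hv⟩ := hc
    have key : ∀ w, w ∉ Q → ∃ q ∈ Q, i (q ⊓ w) m ∈ P := by
      intro w hw
      set E : Set A := {y | ∃ q ∈ Q, i (q ⊓ w) y ∈ P} with hE
      obtain ⟨q0, hq0⟩ := hQne
      have lower : ∀ q q' y : A, q' ≤ q → i (q ⊓ w) y ∈ P → i (q' ⊓ w) y ∈ P :=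
        fun q q' y h hy => hPup _ _ hy (anti1 _ _ _ (inf_le_inf_right w h))
      have hwE : w ∈ E := ⟨q0, hq0, itop _ _ inf_le_right⟩
      have hQE : Q ⊆ E := fun q hq => ⟨q, hq, itop _ _ inf_le_left⟩
      have hEfil : IsLatFilter E := by
        refine ⟨⟨w, hwE⟩, ?_, ?_⟩
        · rintro x y ⟨q, hq, hx⟩ hxy
          exact ⟨q, hq, hPup _ _ hx (mono2 _ _ _ hxy)⟩
        · rintro x y ⟨q1, hq1, h1⟩ ⟨q2, hq2, h2⟩
          refine ⟨q1 ⊓ q2, hQmeet _ _ hq1 hq2, ?_⟩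
          rw [hi2]
          exact hPmeet _ _ (lower _ _ _ inf_le_left h1) (lower _ _ _ inf_le_right h2)
      have hEcl : ∀ x ∈ E, ∀ y, i x y ∈ P → y ∈ E := by
        rintro x ⟨q, hq, hx⟩ y hy
        exact ⟨q, hq, hPup _ _ (hPmeet _ _ hx hy) (hi4 _ _ _)⟩
      by_contra hno
      push_neg at hno
      have hmE : m ∉ E := by rintro ⟨q, hq, hle⟩; exact hno q hq hle
      have hE𝒮 : E ∈ 𝒮 := ⟨hEfil, hEcl, hFQ'.trans hQE, hmE⟩
      exact hw (hmax hE𝒮 hQE hwE)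
    obtain ⟨q1, hq1, h1⟩ := key u hu
    obtain ⟨q2, hq2, h2⟩ := key v hv
    set q : A := q1 ⊓ q2 ⊓ (u ⊔ v) with hq
    have hqQ : q ∈ Q := hQmeet _ _ (hQmeet _ _ hq1 hq2) huv
    have e1 : i (q ⊓ u) m ∈ P :=
      hPup _ _ h1 (anti1 _ _ _ (inf_le_inf_right u (le_trans inf_le_left inf_le_left)))
    have e2 : i (q ⊓ v) m ∈ P :=
      hPup _ _ h2 (anti1 _ _ _ (inf_le_inf_right v (le_trans inf_le_left inf_le_right)))
    have : i q m ∈ P := by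
      have := hPmeet _ _ e1 e2
      rw [← hi3] at this
      have hqe : q ⊓ u ⊔ q ⊓ v = q := by
        rw [← inf_sup_left, inf_eq_left.mpr inf_le_right]
      rwa [hqe] at this
    exact hmQ (hQcl q hqQ m this)

theorem E2_iff_R_sub_Sinv {A : Type*} [DistribLattice A] [BoundedOrder A]
    (i : A → A → A) (d : A → A → A)
(hi1 : ∀ a : A, i a a = ⊤)
    (hi2 : ∀ a b c : A, i a (b ⊓ c) = i a b ⊓ i a c)
    (hi3 : ∀ a b c : A, i (a ⊔ b) c = i a c ⊓ i b c)
    (hi4 : ∀ a b c : A, i a b ⊓ i b c ≤ i a c)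
(hd1 : ∀ a : A, d a a = ⊥)
    (hd2 : ∀ a b c : A, d (a ⊔ b) c = d a c ⊔ d b c)
    (hd3 : ∀ a b c : A, d a (b ⊓ c) = d a b ⊔ d a c)
    (hd4 : ∀ a b c : A, d a c ≤ d a b ⊔ d b c)
    :
    (∀ a b : A, a ≤ b ⊔ i ⊤ (d a b)) ↔
      (∀ P Q : Set A, IsPrimeFilter P → IsPrimeFilter Q → RRel i P Q → SRel d Q P) := by
  constructor
  · intro h P Q hP hQ hR a b ha hb
    have htopQ : ⊤ ∈ Q := by
      obtain ⟨x, hx⟩ := hQ.1.1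
      exact hQ.1.2.1 x ⊤ hx le_top
    have : b ⊔ i ⊤ (d a b) ∈ P := hP.1.2.1 a _ ha (h a b)
    rcases hP.2.2 _ _ this with hbP | hiP
    · exact absurd hbP hb
    · exact hR ⊤ (d a b) hiP htopQ
  · intro h a b
    by_contra hab
    set c : A := b ⊔ i ⊤ (d a b) with hc
    -- build the prime filter P separating a from c
    have hF0 : IsLatFilter {x : A | a ≤ x} :=
      ⟨⟨a, le_refl a⟩, fun x y hx hxy => hx.trans hxy, fun x y hx hy => le_inf hx hy⟩
    obtain ⟨P, hPprime, haP, hcP⟩ := exists_prime_filter_sep {x : A | a ≤ x} hF0 c hab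
    have hPup := hPprime.1.2.1
    have hPmeet := hPprime.1.2.2
    have htopP : ⊤ ∈ P := hPup a ⊤ (haP (le_refl a)) le_top
    have haP' : a ∈ P := haP (le_refl a)
    have hbP : b ∉ P := fun hbP => hcP (hPup b c hbP le_sup_left)
    -- the filter F = {y | i ⊤ y ∈ P}
    set F : Set A := {y | i ⊤ y ∈ P} with hFdef
    have mono2 : ∀ x y z : A, y ≤ z → i x y ≤ i x z := by
      intro x y z hyz
      have : i x y = i x y ⊓ i x z := by rw [← hi2, inf_eq_left.mpr hyz]
      rw [this]; exact inf_le_right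
    have hFfil : IsLatFilter F := by
      refine ⟨⟨⊤, ?_⟩, ?_, ?_⟩
      · show i ⊤ ⊤ ∈ P; rw [hi1]; exact htopP
      · intro x y hx hxy; exact hPup _ _ hx (mono2 _ _ _ hxy)
      · intro x y hx hy; show i ⊤ (x ⊓ y) ∈ P; rw [hi2]; exact hPmeet _ _ hx hy
    have hFcl : ∀ x ∈ F, ∀ y, i x y ∈ P → y ∈ F := by
      intro x hx y hy
      exact hPup _ _ (hPmeet _ _ hx hy) (hi4 ⊤ x y)
    have hmF : d a b ∉ F := fun hd => hcP (hPup _ _ hd le_sup_right)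
    obtain ⟨Q, hQprime, hFQ, hmQ, hQcl⟩ :=
      exists_prime_filter_sep_closed i hi1 hi2 hi3 hi4 P htopP
        (fun x y => hPup x y) (fun x y => hPmeet x y) F hFfil hFcl (d a b) hmF
    have hR : RRel i P Q := fun x y hxy hx => hQcl x hx y hxy
    exact hmQ (h P Q hPprime hQprime hR a b haP' hbP)
end

section
/- Let A be a WHB-algebra, X(A) its set of prime filters, and σ : A → P(X(A)) the Stone map, σ(a) = { P ∈ X(A) : a ∈ P }. Then σ is injective, σ(0) = ∅, σ(1) = X(A), σ(a ∧ b) = σ(a) ∩ σ(b), σ(a ∨ b) = σ(a) ∪ σ(b), σ(a → b) = σ(a) ⇒_{R_A} σ(b), and σ(a ← b) = σ(a) ⇐_{S_A} σ(b) for all a, b ∈ A. Hence every WHB-algebra embeds into the algebra of upward-closed subsets of its canonical frame (X(A), ⊆, R_A, S_A). -/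
theorem WHB_exists_prime {A : Type*} [DistribLattice A]
    (T : A → A → Prop)
    (hT1 : ∀ x y : A, x ≤ y → T x y)
    (hT2 : ∀ x1 x2 y1 y2 : A, T x1 y1 → T x2 y2 → T (x1 ⊓ x2) (y1 ⊓ y2))
    (hT4 : ∀ x y z : A, T x y → T y z → T x z)
    (hT5 : ∀ q x y b : A, T (q ⊓ x) b → T (q ⊓ y) b → T (q ⊓ (x ⊔ y)) b)
    (a b : A) (hab : ¬ T a b) :
    ∃ Q : Set A, IsPrimeFilter Q ∧ a ∈ Q ∧ b ∉ Q ∧ ∀ x y : A, x ∈ Q → T x y → y ∈ Q := by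
  -- the collection of T-closed filters avoiding b
  set S : Set (Set A) :=
    { G | IsLatFilter G ∧ b ∉ G ∧ ∀ x y : A, x ∈ G → T x y → y ∈ G } with hS
  have hG0 : {y : A | T a y} ∈ S := by
    refine ⟨⟨⟨a, hT1 a a le_rfl⟩, ?_, ?_⟩, hab, ?_⟩
    · exact fun x y hx hxy => hT4 a x y hx (hT1 x y hxy)
    · intro x y hx hy
      have := hT2 a a x y hx hy
      simpa using this
    · exact fun x y hx hxy => hT4 a x y hx hxy
  have chain : ∀ c ⊆ S, IsChain (· ⊆ ·) c → c.Nonempty → ∃ ub ∈ S, ∀ s ∈ c, s ⊆ ub := by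
    intro c hcS hc hcne
    refine ⟨⋃₀ c, ⟨⟨?_, ?_, ?_⟩, ?_, ?_⟩, fun s hs => Set.subset_sUnion_of_mem hs⟩
    · obtain ⟨G, hG⟩ := hcne
      obtain ⟨x, hx⟩ := (hcS hG).1.1
      exact ⟨x, G, hG, hx⟩
    · rintro x y ⟨G, hG, hx⟩ hxy
      exact ⟨G, hG, (hcS hG).1.2.1 x y hx hxy⟩
    · rintro x y ⟨G, hG, hx⟩ ⟨G', hG', hy⟩
      rcases hc.total hG hG' with h | h
      · exact ⟨G', hG', (hcS hG').1.2.2 x y (h hx) hy⟩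
      · exact ⟨G, hG, (hcS hG).1.2.2 x y hx (h hy)⟩
    · rintro ⟨G, hG, hb⟩
      exact (hcS hG).2.1 hb
    · rintro x y ⟨G, hG, hx⟩ hxy
      exact ⟨G, hG, (hcS hG).2.2 x y hx hxy⟩
  obtain ⟨M, hM0, hMmax⟩ := zorn_subset_nonempty S chain _ hG0
  have hMS : M ∈ S := hMmax.1
  have hMfil : IsLatFilter M := hMS.1
  have hbM : b ∉ M := hMS.2.1
  have hMcl : ∀ x y : A, x ∈ M → T x y → y ∈ M := hMS.2.2
  have haM : a ∈ M := hM0 (hT1 a a le_rfl)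
  -- key step: if x ∉ M then there is q ∈ M with T (q ⊓ x) b
  have key : ∀ x : A, x ∉ M → ∃ q ∈ M, T (q ⊓ x) b := by
    intro x hx
    by_contra hcon
    push_neg at hcon
    set G : Set A := {z | ∃ q ∈ M, T (q ⊓ x) z} with hG
    have hMG : M ⊆ G := fun q hq => ⟨q, hq, hT1 _ _ inf_le_left⟩
    have hxG : x ∈ G := ⟨a, haM, hT1 _ _ inf_le_right⟩
    have hGS : G ∈ S := by
      refine ⟨⟨⟨x, hxG⟩, ?_, ?_⟩, ?_, ?_⟩
      · rintro z z' ⟨q, hq, hz⟩ hzz'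
        exact ⟨q, hq, hT4 _ _ _ hz (hT1 _ _ hzz')⟩
      · rintro z z' ⟨q, hq, hz⟩ ⟨q', hq', hz'⟩
        refine ⟨q ⊓ q', hMfil.2.2 q q' hq hq', ?_⟩
        have h1 : T ((q ⊓ x) ⊓ (q' ⊓ x)) (z ⊓ z') := hT2 _ _ _ _ hz hz'
        refine hT4 _ _ _ (hT1 _ _ ?_) h1
        exact le_inf (inf_le_inf_right x inf_le_left) (inf_le_inf_right x inf_le_right)
      · rintro ⟨q, hq, hz⟩
        exact hcon q hq hz
      · rintro z z' ⟨q, hq, hz⟩ hzz'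
        exact ⟨q, hq, hT4 _ _ _ hz hzz'⟩
    have hGM : G ⊆ M := hMmax.2 hGS hMG
    exact hx (hGM hxG)
  refine ⟨M, ⟨hMfil, ?_, ?_⟩, haM, hbM, hMcl⟩
  · intro h
    exact hbM (h ▸ Set.mem_univ b)
  · intro x y hxy
    by_contra hcon
    push_neg at hcon
    obtain ⟨q1, hq1, h1⟩ := key x hcon.1
    obtain ⟨q2, hq2, h2⟩ := key y hcon.2
    set q := q1 ⊓ q2 with hq
    have hqM : q ∈ M := hMfil.2.2 q1 q2 hq1 hq2
    have h1' : T (q ⊓ x) b := hT4 _ _ _ (hT1 _ _ (inf_le_inf_right x inf_le_left)) h1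
    have h2' : T (q ⊓ y) b := hT4 _ _ _ (hT1 _ _ (inf_le_inf_right y inf_le_right)) h2
    have h5 := hT5 q x y b h1' h2'
    exact hbM (hMcl _ _ (hMfil.2.2 q (x ⊔ y) hqM hxy) h5)

theorem WHB_representation {A : Type*} [DistribLattice A] [BoundedOrder A]
    (i : A → A → A) (d : A → A → A)
(hi1 : ∀ a : A, i a a = ⊤)
    (hi2 : ∀ a b c : A, i a (b ⊓ c) = i a b ⊓ i a c)
    (hi3 : ∀ a b c : A, i (a ⊔ b) c = i a c ⊓ i b c)
    (hi4 : ∀ a b c : A, i a b ⊓ i b c ≤ i a c)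
(hd1 : ∀ a : A, d a a = ⊥)
    (hd2 : ∀ a b c : A, d (a ⊔ b) c = d a c ⊔ d b c)
    (hd3 : ∀ a b c : A, d a (b ⊓ c) = d a b ⊔ d a c)
    (hd4 : ∀ a b c : A, d a c ≤ d a b ⊔ d b c)
    (hE1 : ∀ a b : A, a ⊓ d (i a b) ⊥ ≤ b)
    (hE2 : ∀ a b : A, a ≤ b ⊔ i ⊤ (d a b))
    (σ : A → Set {P : Set A // IsPrimeFilter P})
    (hσ : ∀ a : A, σ a = {P : {P : Set A // IsPrimeFilter P} | a ∈ P.1}) :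
    Function.Injective σ ∧
    σ ⊥ = ∅ ∧
    σ ⊤ = Set.univ ∧
    (∀ a b : A, σ (a ⊓ b) = σ a ∩ σ b) ∧
    (∀ a b : A, σ (a ⊔ b) = σ a ∪ σ b) ∧
    (∀ a b : A, σ (i a b) = impR (fun P Q => RRel i P.1 Q.1) (σ a) (σ b)) ∧
    (∀ a b : A, σ (d a b) = leftS (fun P Q => SRel d P.1 Q.1) (σ a) (σ b)) := by
  classical
  -- basic facts about prime filters
  have topMem : ∀ P : Set A, IsPrimeFilter P → ⊤ ∈ P := by
    rintro P ⟨⟨⟨x, hx⟩, hup, _⟩, _, _⟩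
    exact hup x ⊤ hx le_top
  have botNot : ∀ P : Set A, IsPrimeFilter P → ⊥ ∉ P := by
    rintro P ⟨⟨_, hup, _⟩, hne, _⟩ hbot
    exact hne (Set.eq_univ_of_forall fun y => hup ⊥ y hbot bot_le)
  -- monotonicity facts for i and d
  have i_top : ∀ x y : A, x ≤ y → i x y = ⊤ := by
    intro x y hxy
    have h1 : i x (x ⊓ y) = i x x ⊓ i x y := hi2 x x y
    rw [inf_eq_left.mpr hxy, hi1] at h1
    simpa using h1.symm
  have i_anti : ∀ x x' y : A, x' ≤ x → i x y ≤ i x' y := by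
    intro x x' y h
    have h1 : i (x' ⊔ x) y = i x' y ⊓ i x y := hi3 x' x y
    rw [sup_eq_right.mpr h] at h1
    rw [h1]; exact inf_le_left
  have d_bot : ∀ x y : A, x ≤ y → d x y = ⊥ := by
    intro x y hxy
    have h1 : d (x ⊔ y) y = d x y ⊔ d y y := hd2 x y y
    rw [sup_eq_right.mpr hxy, hd1] at h1
    exact le_bot_iff.mp (h1 ▸ le_sup_left)
  have d_mono : ∀ x x' y : A, x' ≤ x → d x' y ≤ d x y := by
    intro x x' y h
    have h1 : d (x' ⊔ x) y = d x' y ⊔ d x y := hd2 x' x y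
    rw [sup_eq_right.mpr h] at h1
    rw [h1]; exact le_sup_left
  -- separation via the general lemma with T = (≤)
  have sep : ∀ a b : A, ¬ a ≤ b → ∃ Q : Set A, IsPrimeFilter Q ∧ a ∈ Q ∧ b ∉ Q := by
    intro a b hab
    obtain ⟨Q, hQ, ha, hb, _⟩ := WHB_exists_prime (· ≤ ·) (fun _ _ h => h)
      (fun _ _ _ _ => inf_le_inf) (fun _ _ _ => le_trans)
      (fun q x y c h1 h2 => by rw [inf_sup_left]; exact sup_le h1 h2) a b hab
    exact ⟨Q, hQ, ha, hb⟩
  refine ⟨?_, ?_, ?_, ?_, ?_, ?_, ?_⟩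
  · -- injectivity
    intro a b hab
    have hle : ∀ x y : A, σ x = σ y → x ≤ y := by
      intro x y hxy
      by_contra h
      obtain ⟨Q, hQ, hx, hy⟩ := sep x y h
      have : (⟨Q, hQ⟩ : {P : Set A // IsPrimeFilter P}) ∈ σ x := by rw [hσ]; exact hx
      rw [hxy, hσ] at this
      exact hy this
    exact le_antisymm (hle a b hab) (hle b a hab.symm)
  · ext P; simp only [hσ, Set.mem_setOf_eq, Set.mem_empty_iff_false, iff_false]
    exact botNot P.1 P.2
  · ext P; simp only [hσ, Set.mem_setOf_eq, Set.mem_univ, iff_true]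
    exact topMem P.1 P.2
  · intro a b; ext P
    simp only [hσ, Set.mem_setOf_eq, Set.mem_inter_iff]
    constructor
    · intro h
      exact ⟨P.2.1.2.1 _ _ h inf_le_left, P.2.1.2.1 _ _ h inf_le_right⟩
    · rintro ⟨h1, h2⟩; exact P.2.1.2.2 _ _ h1 h2
  · intro a b; ext P
    simp only [hσ, Set.mem_setOf_eq, Set.mem_union]
    constructor
    · intro h; exact P.2.2.2 a b h
    · rintro (h | h)
      · exact P.2.1.2.1 _ _ h le_sup_left
      · exact P.2.1.2.1 _ _ h le_sup_right
  · -- implication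
    intro a b; ext P
    simp only [hσ, Set.mem_setOf_eq, impR, RRel]
    constructor
    · intro h Q hR ha
      exact hR a b h ha
    · intro h
      by_contra hab
      set T : A → A → Prop := fun x y => i x y ∈ P.1 with hT
      have Pup := P.2.1.2.1
      have Pmeet := P.2.1.2.2
      obtain ⟨Q, hQ, ha, hb, hcl⟩ := WHB_exists_prime T
        (fun x y hxy => by
          simp only [hT]; rw [i_top x y hxy]; exact topMem P.1 P.2)
        (fun x1 x2 y1 y2 h1 h2 => by
          simp only [hT] at *
          have : i x1 y1 ⊓ i x2 y2 ≤ i (x1 ⊓ x2) (y1 ⊓ y2) := by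
            rw [hi2]
            exact inf_le_inf (i_anti x1 _ y1 inf_le_left) (i_anti x2 _ y2 inf_le_right)
          exact Pup _ _ (Pmeet _ _ h1 h2) this)
        (fun x y z h1 h2 => by
          simp only [hT] at *
          exact Pup _ _ (Pmeet _ _ h1 h2) (hi4 x y z))
        (fun q x y c h1 h2 => by
          simp only [hT] at *
          have : i (q ⊓ (x ⊔ y)) c = i (q ⊓ x) c ⊓ i (q ⊓ y) c := by
            rw [inf_sup_left, hi3]
          rw [this]; exact Pmeet _ _ h1 h2)
        a b hab
      exact hb (h ⟨Q, hQ⟩ (fun x y hxy hx => hcl x y hx hxy) ha)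
  · -- coimplication
    intro a b; ext P
    simp only [hσ, Set.mem_setOf_eq, leftS, SRel]
    constructor
    · intro h
      set T : A → A → Prop := fun x y => d x y ∉ P.1 with hT
      have Pup := P.2.1.2.1
      have Pprime := P.2.2.2
      have hab : ¬ T a b := by simp only [hT]; exact not_not_intro h
      obtain ⟨Q, hQ, ha, hb, hcl⟩ := WHB_exists_prime T
        (fun x y hxy => by
          simp only [hT]; rw [d_bot x y hxy]; exact botNot P.1 P.2)
        (fun x1 x2 y1 y2 h1 h2 => by
          simp only [hT] at *
          intro hmem
          have hle : d (x1 ⊓ x2) (y1 ⊓ y2) ≤ d x1 y1 ⊔ d x2 y2 := by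
            rw [hd3]
            exact sup_le_sup (d_mono x1 _ y1 inf_le_left) (d_mono x2 _ y2 inf_le_right)
          rcases Pprime _ _ (Pup _ _ hmem hle) with h' | h'
          · exact h1 h'
          · exact h2 h')
        (fun x y z h1 h2 => by
          simp only [hT] at *
          intro hmem
          rcases Pprime _ _ (Pup _ _ hmem (hd4 x y z)) with h' | h'
          · exact h1 h'
          · exact h2 h')
        (fun q x y c h1 h2 => by
          simp only [hT] at *
          intro hmem
          have heq : d (q ⊓ (x ⊔ y)) c = d (q ⊓ x) c ⊔ d (q ⊓ y) c := by
            rw [inf_sup_left, hd2]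
          rcases Pprime _ _ (heq ▸ hmem) with h' | h'
          · exact h1 h'
          · exact h2 h')
        a b hab
      refine ⟨⟨Q, hQ⟩, ?_, ha, hb⟩
      intro x y hx hy
      by_contra hd
      exact hy (hcl x y hx hd)
    · rintro ⟨Q, hS, ha, hb⟩
      exact hS a b ha hb
end

section
/- Let A be a WHB-algebra and X(A) its set of prime filters. For U ⊆ X(A), define F(U) = { P ∈ X(A) : there is Q ∈ U with (P, Q) ∈ R_A }, P̂(U) = { P ∈ X(A) : there is Q ∈ U with (P, Q) ∈ S_A }, G(U) = X(A) \ F(X(A) \ U), and H(U) = X(A) \ P̂(X(A) \ U). Then for every U ⊆ X(A): F(H(U)) ⊆ U ⊆ H(F(U)) and P̂(G(U)) ⊆ U ⊆ G(P̂(U)). (That is, the operators G and H define a tense-algebra structure on the Boolean algebra of subsets of X(A), with F and P̂ as the dual operators.) -/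
theorem tense_extension {A : Type*} [DistribLattice A] [BoundedOrder A]
    (i : A → A → A) (d : A → A → A)
(hi1 : ∀ a : A, i a a = ⊤)
    (hi2 : ∀ a b c : A, i a (b ⊓ c) = i a b ⊓ i a c)
    (hi3 : ∀ a b c : A, i (a ⊔ b) c = i a c ⊓ i b c)
    (hi4 : ∀ a b c : A, i a b ⊓ i b c ≤ i a c)
(hd1 : ∀ a : A, d a a = ⊥)
    (hd2 : ∀ a b c : A, d (a ⊔ b) c = d a c ⊔ d b c)
    (hd3 : ∀ a b c : A, d a (b ⊓ c) = d a b ⊔ d a c)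
    (hd4 : ∀ a b c : A, d a c ≤ d a b ⊔ d b c)
    (hE1 : ∀ a b : A, a ⊓ d (i a b) ⊥ ≤ b)
    (hE2 : ∀ a b : A, a ≤ b ⊔ i ⊤ (d a b))
    (F P' G H : Set {P : Set A // IsPrimeFilter P} → Set {P : Set A // IsPrimeFilter P})
    (hF : ∀ U, F U = {P | ∃ Q ∈ U, RRel i P.1 Q.1})
    (hP' : ∀ U, P' U = {P | ∃ Q ∈ U, SRel d P.1 Q.1})
    (hG : ∀ U, G U = Set.univ \ F (Set.univ \ U))
    (hH : ∀ U, H U = Set.univ \ P' (Set.univ \ U))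
    (U : Set {P : Set A // IsPrimeFilter P}) :
    F (H U) ⊆ U ∧ U ⊆ H (F U) ∧ P' (G U) ⊆ U ∧ U ⊆ G (P' U) := by

  -- top element is in any prime filter
  have htop : ∀ P : Set A, IsPrimeFilter P → (⊤ : A) ∈ P := by
    intro P hP
    obtain ⟨x, hx⟩ := hP.1.1
    exact hP.1.2.1 x ⊤ hx le_top
  have hbot : ∀ P : Set A, IsPrimeFilter P → (⊥ : A) ∉ P := by
    intro P hP hb
    apply hP.2.1
    ext x
    simp only [Set.mem_univ, iff_true]
    exact hP.1.2.1 ⊥ x hb bot_le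
  -- Lemma A : RRel i P Q → SRel d Q P
  have lemA : ∀ P Q : {P : Set A // IsPrimeFilter P}, RRel i P.1 Q.1 → SRel d Q.1 P.1 := by
    intro P Q hR a b ha hb
    have h1 : b ⊔ i ⊤ (d a b) ∈ P.1 := P.2.1.2.1 a _ ha (hE2 a b)
    rcases P.2.2.2 _ _ h1 with h | h
    · exact absurd h hb
    · exact hR ⊤ (d a b) h (htop Q.1 Q.2)
  -- Lemma B : SRel d P Q → RRel i Q P
  have lemB : ∀ P Q : {P : Set A // IsPrimeFilter P}, SRel d P.1 Q.1 → RRel i Q.1 P.1 := by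
    intro P Q hS a b hi ha
    have h1 : d (i a b) ⊥ ∈ P.1 := hS (i a b) ⊥ hi (hbot Q.1 Q.2)
    have h2 : a ⊓ d (i a b) ⊥ ∈ P.1 := P.2.1.2.2 _ _ ha h1
    exact P.2.1.2.1 _ _ h2 (hE1 a b)
  refine ⟨?_, ?_, ?_, ?_⟩
  · intro P hP
    rw [hF, Set.mem_setOf_eq] at hP
    obtain ⟨Q, hQ, hR⟩ := hP
    rw [hH, Set.mem_diff] at hQ
    by_contra hPU
    apply hQ.2
    rw [hP', Set.mem_setOf_eq]
    exact ⟨P, ⟨Set.mem_univ P, hPU⟩, lemA P Q hR⟩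
  · intro P hP
    rw [hH, Set.mem_diff]
    refine ⟨Set.mem_univ P, ?_⟩
    intro hc
    rw [hP', Set.mem_setOf_eq] at hc
    obtain ⟨Q, hQ, hS⟩ := hc
    exact hQ.2 (by rw [hF]; exact ⟨P, hP, lemB P Q hS⟩)
  · intro P hP
    rw [hP', Set.mem_setOf_eq] at hP
    obtain ⟨Q, hQ, hS⟩ := hP
    rw [hG, Set.mem_diff] at hQ
    by_contra hPU
    apply hQ.2
    rw [hF, Set.mem_setOf_eq]
    exact ⟨P, ⟨Set.mem_univ P, hPU⟩, lemB P Q hS⟩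
  · intro P hP
    rw [hG, Set.mem_diff]
    refine ⟨Set.mem_univ P, ?_⟩
    intro hc
    rw [hF, Set.mem_setOf_eq] at hc
    obtain ⟨Q, hQ, hR⟩ := hc
    exact hQ.2 (by rw [hP']; exact ⟨P, hP, lemA P Q hR⟩)
end
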